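/- arXiv:1003.0501 — 10 statements merged into one kernel-verified Lean document; each statement's English description precedes it below -/
import Mathlib

section
/- Let n be an odd positive integer, w a primitive n-th root of unity in ℂ, and let l, k be integers with gcd(l,n)=gcd(k,n)=1. Then for all natural numbers a and integers b, ∏_{j=1}^{a} (z + w^{2l((2j-1)k + b)})/(1 + z·w^{2l((2j-1)k + b)}) = ∏_{j=1}^{ā} (z + w^{2l((2j-1)k + b)})/(1 + z·w^{2l((2j-1)k + b)}), where ā denotes the residue of a modulo n (0 ≤ ā ≤ n-1), for any z ∈ ℂ such that no denominator vanishes. -/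
/-!
With `u = w ^ (4lk)` and `c = w ^ (2l(k + b))` the `j`-th factor is
`(z + u ^ j c) / (1 + z u ^ j c)`. Since `u ^ n = 1` the factors are `n`-periodic in `j`, so it
suffices that one full period multiplies to `1`. As `gcd(4lk, n) = 1`, `u` is again a primitive
`n`-th root of unity, hence `u ^ j c` (`j < n`) runs through all `n`-th roots of unity `ζ`, and for
odd `n` both `∏ (z + ζ)` and `∏ (1 + z ζ)` equal `z ^ n + 1`.
-/

open Finset Polynomial

theorem Function.Periodic.prod_range_eq_prod_range_mod {M : Type*} [CommMonoid M] {f : ℕ → M}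
    {n : ℕ} (hf : Function.Periodic f n) (hperiod : ∏ j ∈ range n, f j = 1) (a : ℕ) :
    ∏ j ∈ range a, f j = ∏ j ∈ range (a % n), f j := by
  induction a using Nat.strong_induction_on with
  | _ a ih =>
    obtain ha | ha := lt_or_ge a n
    · rw [Nat.mod_eq_of_lt ha]
    obtain rfl | hn := n.eq_zero_or_pos
    · rw [Nat.mod_zero]
    obtain ⟨m, rfl⟩ : ∃ m, a = n + m := ⟨a - n, by omega⟩
    rw [prod_range_add, hperiod, one_mul, Nat.add_mod_left, ← ih m (by omega)]
    exact prod_congr rfl fun j _ => by rw [add_comm, hf]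

namespace IsPrimitiveRoot

variable {R : Type*} [CommRing R] [IsDomain R] {u : R} {n : ℕ}

theorem prod_nthRootsFinset_eq_prod_range {M : Type*} [CommMonoid M] (hu : IsPrimitiveRoot u n)
    {c : R} (hc : c ^ n = 1) (f : R → M) :
    ∏ ζ ∈ nthRootsFinset n (1 : R), f ζ = ∏ j ∈ range n, f (u ^ j * c) := by
  classical
  rw [nthRootsFinset_def, prod_eq_multiset_prod, Multiset.toFinset_val,
    hu.nthRoots_one_nodup.dedup, hu.nthRoots_eq hc, Multiset.map_map, prod_eq_multiset_prod,
    range_val]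
  rfl

theorem prod_range_add_pow_mul_eq_prod_range_one_add_mul (hu : IsPrimitiveRoot u n)
    (hodd : Odd n) {c : R} (hc : c ^ n = 1) (z : R) :
    ∏ j ∈ range n, (z + u ^ j * c) = ∏ j ∈ range n, (1 + z * (u ^ j * c)) := by
  have hnum := hu.pow_add_pow_eq_prod_add_mul z 1 hodd
  have hden := hu.pow_add_pow_eq_prod_add_mul 1 z hodd
  rw [hu.prod_nthRootsFinset_eq_prod_range hc] at hnum hden
  simp only [mul_one, one_pow] at hnum hden
  rw [← hnum, add_comm, hden]
  simp only [mul_comm z]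

theorem prod_range_add_pow_mul_div_one_add_mul {K : Type*} [Field K] {u : K} {n : ℕ}
    (hu : IsPrimitiveRoot u n) (hodd : Odd n) {c : K} (hc : c ^ n = 1) {z : K}
    (hz : ∀ j < n, 1 + z * (u ^ j * c) ≠ 0) :
    ∏ j ∈ range n, (z + u ^ j * c) / (1 + z * (u ^ j * c)) = 1 := by
  rw [prod_div_distrib, hu.prod_range_add_pow_mul_eq_prod_range_one_add_mul hodd hc]
  exact div_self (prod_ne_zero_iff.mpr fun j hj => hz j (mem_range.mp hj))

end IsPrimitiveRoot

theorem stmt0_general (n : ℕ) (hodd : Odd n) (w : ℂ) (hw : IsPrimitiveRoot w n)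
    (l k : ℤ) (hl : Int.gcd l n = 1) (hk : Int.gcd k n = 1)
    (a : ℕ) (b : ℤ) (z : ℂ)
    (hz : ∀ j : ℤ, 1 + z * w ^ (2 * l * ((2 * j - 1) * k + b)) ≠ 0) :
    ∏ j ∈ Finset.range a,
        (z + w ^ (2 * l * ((2 * ((j : ℤ) + 1) - 1) * k + b))) /
          (1 + z * w ^ (2 * l * ((2 * ((j : ℤ) + 1) - 1) * k + b)))
      = ∏ j ∈ Finset.range (a % n),
        (z + w ^ (2 * l * ((2 * ((j : ℤ) + 1) - 1) * k + b))) /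
          (1 + z * w ^ (2 * l * ((2 * ((j : ℤ) + 1) - 1) * k + b))) := by
  have hw0 : w ≠ 0 := hw.ne_zero hodd.pos.ne'
  have h2 : IsCoprime (2 : ℤ) n := by
    exact_mod_cast Nat.isCoprime_iff_coprime.mpr hodd.coprime_two_left
  have h4lk : IsCoprime (4 * l * k) n :=
    ((h2.mul_left h2).mul_left (Int.isCoprime_iff_gcd_eq_one.mpr hl)).mul_left
      (Int.isCoprime_iff_gcd_eq_one.mpr hk)
  have hexp : ∀ j : ℕ, w ^ (2 * l * ((2 * ((j : ℤ) + 1) - 1) * k + b))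
      = (w ^ (4 * l * k)) ^ j * w ^ (2 * l * (k + b)) := fun j => by
    rw [← zpow_natCast, ← zpow_mul, ← zpow_add₀ hw0]
    ring_nf
  set u := w ^ (4 * l * k)
  set c := w ^ (2 * l * (k + b))
  have hu : IsPrimitiveRoot u n := hw.zpow_of_gcd_eq_one _ (Int.isCoprime_iff_gcd_eq_one.mp h4lk)
  have hc : c ^ n = 1 := by
    rw [← zpow_natCast, ← zpow_mul, mul_comm, zpow_mul, zpow_natCast, hw.pow_eq_one, one_zpow]
  simp only [hexp]
  have hperiodic :
      Function.Periodic (fun j : ℕ => (z + u ^ j * c) / (1 + z * (u ^ j * c))) n :=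
    fun j => by simp only [pow_add, hu.pow_eq_one, mul_one]
  refine hperiodic.prod_range_eq_prod_range_mod
    (hu.prod_range_add_pow_mul_div_one_add_mul hodd hc fun j _ => ?_) a
  rw [← hexp]
  exact hz (j + 1)

/-- Lemma 1 of the paper: the product
`∏_{j=1}^{a} (z + w^{2l((2j-1)k+b)})/(1 + z w^{2l((2j-1)k+b)})` depends on `a` only
modulo `n`, when `w` is a primitive `n`-th root of unity (`n` odd) and
`gcd(l,n) = gcd(k,n) = 1`. -/
theorem stmt0 (n : ℕ) (hodd : Odd n) (hpos : 0 < n) (w : ℂ) (hw : IsPrimitiveRoot w n)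
    (l k : ℤ) (hl : Int.gcd l n = 1) (hk : Int.gcd k n = 1)
    (a : ℕ) (b : ℤ) (z : ℂ)
    (hz : ∀ j : ℤ, 1 + z * w ^ (2 * l * ((2 * j - 1) * k + b)) ≠ 0) :
    ∏ j ∈ Finset.range a,
        (z + w ^ (2 * l * ((2 * ((j : ℤ) + 1) - 1) * k + b))) /
          (1 + z * w ^ (2 * l * ((2 * ((j : ℤ) + 1) - 1) * k + b)))
      = ∏ j ∈ Finset.range (a % n),
        (z + w ^ (2 * l * ((2 * ((j : ℤ) + 1) - 1) * k + b))) /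
          (1 + z * w ^ (2 * l * ((2 * ((j : ℤ) + 1) - 1) * k + b))) :=
  stmt0_general n hodd w hw l k hl hk a b z hz
end

section
/- Let n ≥ 3 be odd, w a primitive n-th root of unity, and define L(z) ∈ End(ℂ² ⊗ ℂⁿ) by L(z) = Σ_{i=0}^{n-1} [ (w^{2i} e_{1,2} + w^{-2i} e_{2,1}) ⊗ e_{i,i} + z (e_{1,1} ⊗ e_{i-1,i} + e_{2,2} ⊗ e_{i+1,i}) ], where indices of the n×n elementary matrices are taken modulo n. Then with r(z) the zero-field six-vertex R-matrix (entries w²z^{-1}-w^{-2}z on corners, z^{-1}-z on middle diagonal, w²-w^{-2} anti-diagonal middle), the intertwining relation r_{12}(x y^{-1}) L_{13}(x) L_{23}(y) = L_{23}(y) L_{13}(x) r_{12}(x y^{-1}) holds for all nonzero x, y ∈ ℂ. -/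
open Matrix Kronecker Finset

noncomputable def E2 (i j : Fin 2) : Matrix (Fin 2) (Fin 2) ℂ :=
  Matrix.single i j 1

/-- elementary n×n matrix with indices mod n. -/
noncomputable def EM (n : ℕ) [NeZero n] (i j : ZMod n) : Matrix (ZMod n) (ZMod n) ℂ :=
  Matrix.single i j 1

def act12 {α β γ : Type*} [DecidableEq γ]
    (R : Matrix (α × β) (α × β) ℂ) : Matrix (α × β × γ) (α × β × γ) ℂ :=
  Matrix.of fun i j => R (i.1, i.2.1) (j.1, j.2.1) * (if i.2.2 = j.2.2 then 1 else 0)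

def act13 {α β γ : Type*} [DecidableEq β]
    (R : Matrix (α × γ) (α × γ) ℂ) : Matrix (α × β × γ) (α × β × γ) ℂ :=
  Matrix.of fun i j => R (i.1, i.2.2) (j.1, j.2.2) * (if i.2.1 = j.2.1 then 1 else 0)

def act23 {α β γ : Type*} [DecidableEq α]
    (R : Matrix (β × γ) (β × γ) ℂ) : Matrix (α × β × γ) (α × β × γ) ℂ :=
  Matrix.of fun i j => R (i.2.1, i.2.2) (j.2.1, j.2.2) * (if i.1 = j.1 then 1 else 0)

/-- zero-field six-vertex R-matrix. -/
noncomputable def sixv (w z : ℂ) : Matrix (Fin 2 × Fin 2) (Fin 2 × Fin 2) ℂ :=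
  (w ^ (2 : ℤ) * z⁻¹ - w ^ (-2 : ℤ) * z) • (E2 0 0 ⊗ₖ E2 0 0 + E2 1 1 ⊗ₖ E2 1 1)
    + (z⁻¹ - z) • (E2 0 0 ⊗ₖ E2 1 1 + E2 1 1 ⊗ₖ E2 0 0)
    + (w ^ (2 : ℤ) - w ^ (-2 : ℤ)) • (E2 0 1 ⊗ₖ E2 1 0 + E2 1 0 ⊗ₖ E2 0 1)

/-- the L-operator
`L(z) = Σ_i (w^{2i}e_{1,2} + w^{-2i}e_{2,1})⊗e_{i,i} + z(e_{1,1}⊗e_{i-1,i} + e_{2,2}⊗e_{i+1,i})`. -/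
noncomputable def Lop (n : ℕ) [NeZero n] (w z : ℂ) :
    Matrix (Fin 2 × ZMod n) (Fin 2 × ZMod n) ℂ :=
  ∑ i : ZMod n,
    (w ^ ((2 * (i.val : ℤ))) • (E2 0 1 ⊗ₖ EM n i i)
      + w ^ ((-2 * (i.val : ℤ))) • (E2 1 0 ⊗ₖ EM n i i)
      + z • (E2 0 0 ⊗ₖ EM n (i - 1) i)
      + z • (E2 1 1 ⊗ₖ EM n (i + 1) i))

/-!
Write `S` for the clock matrix `diag(w^{2i})` and `T` for the cyclic shift `e_i ↦ e_{i+1}`. Then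
`L(z) = e₁₂ ⊗ S + e₂₁ ⊗ S⁻¹ + z (e₁₁ ⊗ T⁻¹ + e₂₂ ⊗ T)`, and `w^n = 1` gives the Weyl relation
`S T = w² T S`. The intertwining relation holds for any quadruple `S, S⁻¹, T⁻¹, T` obeying these
relations: after normal-ordering every product of two of them (shifts to the left), both sides are
combinations of `e_ab ⊗ e_cd ⊗ W` with the same words `W`, and the coefficients agree as Laurent
polynomials in `x`, `y`, `w`.
-/

lemma E2_mul (a b c d : Fin 2) : E2 a b * E2 c d = if b = c then E2 a d else 0 := by
  unfold E2
  split_ifs with h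
  · rw [h, single_mul_single_same, one_mul]
  · exact single_mul_single_of_ne (h := h) ..

section Monomial

variable {ι R : Type*} [Fintype ι] [DecidableEq ι] [CommSemiring R]

lemma sum_smul_single_mul_sum_smul_single (c d : ι → R) (σ τ : ι → ι) :
    (∑ i, c i • single (σ i) i (1 : R)) * (∑ i, d i • single (τ i) i (1 : R))
      = ∑ i, (c (τ i) * d i) • single (σ (τ i)) i (1 : R) := by
  rw [sum_mul_sum, sum_comm]
  refine sum_congr rfl fun i _ => ?_
  have hterm : ∀ j, c j • single (σ j) j (1 : R) * d i • single (τ i) i 1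
      = if j = τ i then (c j * d i) • single (σ j) i 1 else 0 := by
    intro j
    rw [smul_mul_smul_comm]
    split_ifs with h
    · rw [h, single_mul_single_same, one_mul]
    · rw [single_mul_single_of_ne (h := h), smul_zero]
  simp only [hterm, sum_ite_eq']
  simp

lemma sum_single_diag_eq_one : ∑ i : ι, single i i (1 : R) = 1 := by
  ext a b
  simp [Matrix.sum_apply, single, one_apply, ite_and]

end Monomial

noncomputable def clock (n : ℕ) [NeZero n] (w : ℂ) (k : ℤ) : Matrix (ZMod n) (ZMod n) ℂ :=
  ∑ i : ZMod n, w ^ (k * (i.val : ℤ)) • EM n i i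

noncomputable def shift (n : ℕ) [NeZero n] (a : ℤ) : Matrix (ZMod n) (ZMod n) ℂ :=
  ∑ i : ZMod n, EM n (i + a) i

section ClockShift

variable (n : ℕ) [NeZero n] {w : ℂ}

lemma shift_eq_sum_smul (a : ℤ) : shift n a = ∑ i : ZMod n, (1 : ℂ) • EM n (i + a) i := by
  simp [shift]

lemma clock_mul_clock (hw : w ≠ 0) (k l : ℤ) :
    clock n w k * clock n w l = clock n w (k + l) := by
  simp only [clock, EM]
  rw [sum_smul_single_mul_sum_smul_single _ _ (fun i => i) (fun i => i)]
  simp [← zpow_add₀ hw, add_mul]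

lemma clock_zero : clock n w 0 = 1 := by
  simp [clock, EM, sum_single_diag_eq_one]

lemma shift_mul_shift (a b : ℤ) : shift n a * shift n b = shift n (a + b) := by
  simp only [shift_eq_sum_smul, EM]
  rw [sum_smul_single_mul_sum_smul_single _ _ (· + (a : ZMod n)) (· + (b : ZMod n))]
  simp [add_assoc, add_comm (b : ZMod n)]

lemma shift_zero : shift n 0 = 1 := by
  simp [shift, EM, sum_single_diag_eq_one]

lemma zpow_val_add_intCast (hw : w ^ n = 1) (k a : ℤ) (i : ZMod n) :
    w ^ (k * ((i + a : ZMod n).val : ℤ)) = w ^ (k * a) * w ^ (k * (i.val : ℤ)) := by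
  have hw0 : w ≠ 0 := by rintro rfl; simp [NeZero.ne n] at hw
  rw [← zpow_add₀ hw0]
  have hmod : ((i + a : ZMod n).val : ℤ) ≡ a + i.val [ZMOD n] := by
    rw [← ZMod.intCast_eq_intCast_iff]
    push_cast [ZMod.natCast_val, ZMod.cast_id]
    ring
  obtain ⟨m, hm⟩ := hmod.symm.dvd
  have hexp : k * ((i + a : ZMod n).val : ℤ) = k * a + k * i.val + n * (k * m) := by
    linear_combination k * hm
  rw [hexp, zpow_add₀ hw0, _root_.zpow_mul, zpow_natCast, hw, _root_.one_zpow, mul_one]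

lemma clock_mul_shift (hw : w ^ n = 1) (k a : ℤ) :
    clock n w k * shift n a = w ^ (k * a) • (shift n a * clock n w k) := by
  simp only [clock, shift_eq_sum_smul, EM]
  rw [sum_smul_single_mul_sum_smul_single _ _ (fun i => i) (· + (a : ZMod n)),
    sum_smul_single_mul_sum_smul_single _ _ (· + (a : ZMod n)) (fun i => i), smul_sum]
  refine sum_congr rfl fun i _ => ?_
  simp only [mul_one, one_mul, zpow_val_add_intCast n hw, smul_smul]

end ClockShift

section Embeddings

variable {α β γ : Type*}

lemma act12_kronecker [DecidableEq γ] (P : Matrix α α ℂ) (Q : Matrix β β ℂ) :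
    (act12 (P ⊗ₖ Q) : Matrix (α × β × γ) _ ℂ) = P ⊗ₖ (Q ⊗ₖ 1) := by
  ext i j
  simp [act12, one_apply]

lemma act13_kronecker [DecidableEq β] (P : Matrix α α ℂ) (M : Matrix γ γ ℂ) :
    (act13 (P ⊗ₖ M) : Matrix (α × β × γ) _ ℂ) = P ⊗ₖ (1 ⊗ₖ M) := by
  ext i j
  simp [act13, one_apply]

lemma act23_kronecker [DecidableEq α] (Q : Matrix β β ℂ) (M : Matrix γ γ ℂ) :
    (act23 (Q ⊗ₖ M) : Matrix (α × β × γ) _ ℂ) = 1 ⊗ₖ (Q ⊗ₖ M) := by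
  ext i j
  simp [act23, one_apply, mul_comm]

lemma act12_add [DecidableEq γ] (A B : Matrix (α × β) (α × β) ℂ) :
    (act12 (A + B) : Matrix (α × β × γ) _ ℂ) = act12 A + act12 B := by
  ext i j
  simp only [act12, of_apply, Matrix.add_apply, add_mul]

lemma act13_add [DecidableEq β] (A B : Matrix (α × γ) (α × γ) ℂ) :
    (act13 (A + B) : Matrix (α × β × γ) _ ℂ) = act13 A + act13 B := by
  ext i j
  simp only [act13, of_apply, Matrix.add_apply, add_mul]

lemma act23_add [DecidableEq α] (A B : Matrix (β × γ) (β × γ) ℂ) :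
    (act23 (A + B) : Matrix (α × β × γ) _ ℂ) = act23 A + act23 B := by
  ext i j
  simp only [act23, of_apply, Matrix.add_apply, add_mul]

lemma act12_smul [DecidableEq γ] (c : ℂ) (A : Matrix (α × β) (α × β) ℂ) :
    (act12 (c • A) : Matrix (α × β × γ) _ ℂ) = c • act12 A := by
  ext i j
  simp [act12]

lemma act13_smul [DecidableEq β] (c : ℂ) (A : Matrix (α × γ) (α × γ) ℂ) :
    (act13 (c • A) : Matrix (α × β × γ) _ ℂ) = c • act13 A := by
  ext i j
  simp [act13]

lemma act23_smul [DecidableEq α] (c : ℂ) (A : Matrix (β × γ) (β × γ) ℂ) :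
    (act23 (c • A) : Matrix (α × β × γ) _ ℂ) = c • act23 A := by
  ext i j
  simp [act23]

end Embeddings

noncomputable def laxOperator {γ : Type*} (z : ℂ) (S S' Tm Tp : Matrix γ γ ℂ) :
    Matrix (Fin 2 × γ) (Fin 2 × γ) ℂ :=
  E2 0 1 ⊗ₖ S + E2 1 0 ⊗ₖ S' + z • (E2 0 0 ⊗ₖ Tm) + z • (E2 1 1 ⊗ₖ Tp)

theorem sixv_laxOperator_intertwining {γ : Type*} [Fintype γ] [DecidableEq γ] {w : ℂ} (hw : w ≠ 0)
    {S S' Tm Tp : Matrix γ γ ℂ}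
    (hSS' : S * S' = 1) (hS'S : S' * S = 1) (hTmTp : Tm * Tp = 1) (hTpTm : Tp * Tm = 1)
    (hSTm : S * Tm = w ^ (-2 : ℤ) • (Tm * S)) (hSTp : S * Tp = w ^ (2 : ℤ) • (Tp * S))
    (hS'Tm : S' * Tm = w ^ (2 : ℤ) • (Tm * S')) (hS'Tp : S' * Tp = w ^ (-2 : ℤ) • (Tp * S'))
    {x y : ℂ} (hx : x ≠ 0) (hy : y ≠ 0) :
    act12 (sixv w (x * y⁻¹)) * act13 (laxOperator x S S' Tm Tp)
        * act23 (laxOperator y S S' Tm Tp)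
      = act23 (laxOperator y S S' Tm Tp) * act13 (laxOperator x S S' Tm Tp)
        * act12 (sixv w (x * y⁻¹)) := by
  simp only [laxOperator, sixv, act12_add, act12_smul, act13_add, act13_smul, act23_add,
    act23_smul, act12_kronecker, act13_kronecker, act23_kronecker]
  simp only [mul_add, add_mul, smul_mul_assoc, mul_smul_comm, ← mul_kronecker_mul, E2_mul,
    one_mul, mul_one, Fin.isValue, one_ne_zero, zero_ne_one, reduceIte, zero_kronecker,
    kronecker_zero, smul_zero, add_zero, zero_add, smul_smul]
  simp only [hSS', hS'S, hTmTp, hTpTm, hSTm, hSTp, hS'Tm, hS'Tp, kronecker_smul,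
    smul_smul, _root_.zpow_neg]
  match_scalars <;> field_simp <;> ring

lemma kronecker_sum {ι l m n p : Type*} [Fintype ι] (P : Matrix l m ℂ) (M : ι → Matrix n p ℂ) :
    P ⊗ₖ ∑ i, M i = ∑ i, P ⊗ₖ M i :=
  map_sum (kroneckerBilinear (R := ℂ) P) M univ

lemma Lop_eq_laxOperator (n : ℕ) [NeZero n] (w z : ℂ) :
    Lop n w z = laxOperator z (clock n w 2) (clock n w (-2)) (shift n (-1)) (shift n 1) := by
  simp only [Lop, laxOperator, clock, shift, kronecker_sum, kronecker_smul, sum_add_distrib,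
    smul_sum]
  push_cast
  simp only [sub_eq_add_neg]

theorem stmt2_general (n : ℕ) [NeZero n]
    (w : ℂ) (hw : IsPrimitiveRoot w n) (x y : ℂ) (hx : x ≠ 0) (hy : y ≠ 0) :
    act12 (sixv w (x * y⁻¹)) * act13 (Lop n w x) * act23 (Lop n w y)
      = act23 (Lop n w y) * act13 (Lop n w x) * act12 (sixv w (x * y⁻¹)) := by
  have hw0 : w ≠ 0 := hw.ne_zero (NeZero.ne n)
  have hwn : w ^ n = 1 := hw.pow_eq_one
  have hclock : ∀ k l : ℤ, k + l = 0 → clock n w k * clock n w l = 1 := fun k l hkl => by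
    rw [clock_mul_clock n hw0, hkl, clock_zero]
  have hshift : ∀ a b : ℤ, a + b = 0 → shift n a * shift n b = 1 := fun a b hab => by
    rw [shift_mul_shift, hab, shift_zero]
  rw [Lop_eq_laxOperator, Lop_eq_laxOperator]
  refine sixv_laxOperator_intertwining hw0 (hclock _ _ (by norm_num)) (hclock _ _ (by norm_num))
    (hshift _ _ (by norm_num)) (hshift _ _ (by norm_num)) ?_ ?_ ?_ ?_ hx hy
  all_goals rw [clock_mul_shift n hwn]; norm_num

/-- the intertwining relation
`r₁₂(xy⁻¹) L₁₃(x) L₂₃(y) = L₂₃(y) L₁₃(x) r₁₂(xy⁻¹)`. -/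
theorem stmt2 (n : ℕ) [NeZero n] (hn : 3 ≤ n) (hodd : Odd n)
    (w : ℂ) (hw : IsPrimitiveRoot w n) (x y : ℂ) (hx : x ≠ 0) (hy : y ≠ 0) :
    act12 (sixv w (x * y⁻¹)) * act13 (Lop n w x) * act23 (Lop n w y)
      = act23 (Lop n w y) * act13 (Lop n w x) * act12 (sixv w (x * y⁻¹)) :=
  stmt2_general n w hw x y hx hy
end

section
/- Let n be odd and w a primitive n-th root of unity. For α = (a,b) with 0 ≤ a ≤ (n-1)/2 (and appropriate range of b), define p^α = (c^α/n) Σ_{i,j=0}^{n-1} [ w^{2bj} e_{i+a+j,i+a} ⊗ e_{i+j,i} + w^{-2bj} e_{i-a+j,i-a} ⊗ e_{i+j,i} ], where c^α = 1/2 if α = (0,0) and c^α = 1 otherwise. Then each p^α is idempotent: (p^α)² = p^α. -/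
open Matrix Kronecker Finset

/-- normalisation constant: `1/2` for `α=(0,0)`, else `1`. -/
noncomputable def ccoef (a b : ℕ) : ℂ := if a = 0 ∧ b = 0 then 1 / 2 else 1

/-- the projection operator
`p^{(a,b)} = (c/n) Σ_{i,j} [w^{2bj} e_{i+a+j,i+a}⊗e_{i+j,i} + w^{-2bj} e_{i-a+j,i-a}⊗e_{i+j,i}]`. -/
noncomputable def proj (n : ℕ) [NeZero n] (w : ℂ) (a b : ℕ) :
    Matrix (ZMod n × ZMod n) (ZMod n × ZMod n) ℂ :=
  (ccoef a b / (n : ℂ)) • ∑ i : ZMod n, ∑ j : ZMod n,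
    (w ^ ((2 * (b : ℤ) * (j.val : ℤ))) • (EM n (i + (a : ZMod n) + j) (i + (a : ZMod n)) ⊗ₖ EM n (i + j) i)
      + w ^ ((-(2 * (b : ℤ) * (j.val : ℤ)))) • (EM n (i - (a : ZMod n) + j) (i - (a : ZMod n)) ⊗ₖ EM n (i + j) i))

/-- the index set `S`: `(0,0)`; `(0,b)` for `1 ≤ b ≤ (n-1)/2`; `(a,b)` for
`1 ≤ a ≤ (n-1)/2`, `0 ≤ b ≤ n-1`. -/
def idxS (n : ℕ) : Finset (ℕ × ℕ) :=
  (Finset.range n ×ˢ Finset.range n).filter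
    (fun p => (p.1 = 0 ∧ p.2 = 0) ∨ (p.1 = 0 ∧ 1 ≤ p.2 ∧ p.2 ≤ (n - 1) / 2)
      ∨ (1 ≤ p.1 ∧ p.1 ≤ (n - 1) / 2))

/-!
Substituting `u = i + j`, `v = i`, each half of `p^α` becomes the rank-one matrix `f gᵀ`, where
`f` and `g` live on the shifted diagonal `{(u + s, u)}` (with `s = ±a`) and carry the additive
characters `χ^{±1}` of `ZMod n`, `χ u = w^{2bu}`. Character orthogonality gives `gᵀ f = n`, so
each half divided by `n` is idempotent, and the two halves annihilate each other unless
`a ≡ -a` and `χ = χ⁻¹`. For odd `n` that happens only at `α = (0,0)`, where the halves coincide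
and `c^α = 1/2` compensates.
-/

section
variable {G R : Type*} [AddCommGroup G] [Fintype G] [DecidableEq G]

def shiftVec [Zero R] (s : G) (f : G → R) : G × G → R :=
  fun p => if p.1 = p.2 + s then f p.2 else 0

variable [CommRing R]

def twistedShift (s : G) (ψ : AddChar G R) : Matrix (G × G) (G × G) R :=
  ∑ i, ∑ j, ψ j • (single (i + s + j) (i + s) (1 : R) ⊗ₖ single (i + j) i (1 : R))

lemma twistedShift_eq_vecMulVec (s : G) (ψ : AddChar G R) :
    twistedShift s ψ = vecMulVec (shiftVec s ψ) (shiftVec s ⇑(ψ⁻¹)) := by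
  ext ⟨x, u⟩ ⟨y, v⟩
  simp only [twistedShift, shiftVec, Matrix.sum_apply, Matrix.smul_apply, kroneckerMap_apply,
    single_apply, vecMulVec_apply, AddChar.inv_apply]
  rw [Fintype.sum_eq_single v fun i hi => by simp [hi], Fintype.sum_eq_single (u - v) fun j hj => by
    simp [show v + j ≠ u from fun h => hj (by rw [← h]; abel)]]
  rw [show v + s + (u - v) = u + s by abel, add_sub_cancel, sub_eq_add_neg, AddChar.map_add_eq_mul]
  by_cases hx : x = u + s <;> by_cases hy : y = v + s <;> simp [hx, hy, eq_comm]

lemma shiftVec_dotProduct_shiftVec (s t : G) (f g : G → R) :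
    shiftVec s f ⬝ᵥ shiftVec t g = if s = t then ∑ u, f u * g u else 0 := by
  simp [dotProduct, shiftVec, Fintype.sum_prod_type_right, eq_comm]

lemma twistedShift_mul_twistedShift [IsDomain R] (s t : G) (ψ φ : AddChar G R) :
    twistedShift s ψ * twistedShift t φ =
      if s = t ∧ ψ = φ then (Fintype.card G : R) • twistedShift s ψ else 0 := by
  have hsum : ∑ u, ψ⁻¹ u * φ u = if ψ = φ then (Fintype.card G : R) else 0 := by
    simp_rw [← AddChar.mul_apply, AddChar.sum_eq_ite, ← AddChar.one_eq_zero, inv_mul_eq_one]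
  rw [twistedShift_eq_vecMulVec, twistedShift_eq_vecMulVec, vecMulVec_mul_vecMulVec,
    shiftVec_dotProduct_shiftVec, hsum]
  obtain rfl | hst := eq_or_ne s t
  · obtain rfl | hψφ := eq_or_ne ψ φ
    · simp [vecMulVec_smul]
    · simp [hψφ]
  · simp [hst]

end

section
variable {G R : Type*} [AddCommGroup G] [Fintype G] [DecidableEq G] [Field R]

lemma isIdempotentElem_inv_card_smul_twistedShift (hG : (Fintype.card G : R) ≠ 0) (s : G)
    (ψ : AddChar G R) :
    IsIdempotentElem ((Fintype.card G : R)⁻¹ • twistedShift s ψ) := by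
  rw [IsIdempotentElem, smul_mul_smul, twistedShift_mul_twistedShift, if_pos ⟨rfl, rfl⟩, smul_smul,
    inv_mul_cancel_right₀ hG]

lemma isIdempotentElem_inv_card_smul_twistedShift_add (hG : (Fintype.card G : R) ≠ 0) {s t : G}
    {ψ φ : AddChar G R} (h : s ≠ t ∨ ψ ≠ φ) :
    IsIdempotentElem ((Fintype.card G : R)⁻¹ • twistedShift s ψ +
      (Fintype.card G : R)⁻¹ • twistedShift t φ) := by
  refine (isIdempotentElem_inv_card_smul_twistedShift hG s ψ).add
    (isIdempotentElem_inv_card_smul_twistedShift hG t φ) ?_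
  have hst : ¬ (s = t ∧ ψ = φ) := by tauto
  have hts : ¬ (t = s ∧ φ = ψ) := by tauto
  simp only [smul_mul_smul, twistedShift_mul_twistedShift, if_neg hst, if_neg hts, smul_zero,
    add_zero]

end

lemma ZMod.natCast_ne_neg_natCast {n a : ℕ} (ha : 0 < a) (han : 2 * a < n) :
    (a : ZMod n) ≠ -(a : ZMod n) := by
  intro h
  have h2a : ((2 * a : ℕ) : ZMod n) = 0 := by push_cast; linear_combination h
  rw [ZMod.natCast_eq_zero_iff] at h2a
  exact absurd (Nat.le_of_dvd (by omega) h2a) (by omega)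

section
variable {n : ℕ} [NeZero n] {w : ℂ}

lemma zmodChar_pow_eq_one_iff (hw : IsPrimitiveRoot w n) (m : ℕ) :
    AddChar.zmodChar n hw.pow_eq_one ^ m = 1 ↔ n ∣ m := by
  rw [← hw.pow_eq_one_iff_dvd]
  constructor
  · intro h
    have h1 := congrArg (fun χ : AddChar (ZMod n) ℂ => χ ((1 : ℕ) : ZMod n)) h
    rwa [AddChar.pow_apply, AddChar.zmodChar_apply', pow_one, AddChar.one_apply] at h1
  · intro h
    ext a
    rw [AddChar.pow_apply, AddChar.zmodChar_apply, ← pow_mul, mul_comm, pow_mul, h, one_pow,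
      AddChar.one_apply]

lemma zmodChar_pow_ne_inv (hw : IsPrimitiveRoot w n) {m : ℕ} (hm : ¬ n ∣ 2 * m) :
    AddChar.zmodChar n hw.pow_eq_one ^ m ≠ (AddChar.zmodChar n hw.pow_eq_one ^ m)⁻¹ := by
  intro h
  apply hm
  rw [← zmodChar_pow_eq_one_iff hw, two_mul, pow_add]
  exact mul_eq_one_iff_eq_inv.mpr h

lemma proj_eq (hw : IsPrimitiveRoot w n) (a b : ℕ) :
    proj n w a b = ccoef a b •
      ((Fintype.card (ZMod n) : ℂ)⁻¹ •
          twistedShift (a : ZMod n) (AddChar.zmodChar n hw.pow_eq_one ^ (2 * b)) +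
        (Fintype.card (ZMod n) : ℂ)⁻¹ •
          twistedShift (-(a : ZMod n)) (AddChar.zmodChar n hw.pow_eq_one ^ (2 * b))⁻¹) := by
  have hχ (j : ZMod n) :
      w ^ (2 * (b : ℤ) * (j.val : ℤ)) = (AddChar.zmodChar n hw.pow_eq_one ^ (2 * b)) j := by
    rw [AddChar.pow_apply, AddChar.zmodChar_apply, ← pow_mul, mul_comm, ← zpow_natCast]
    push_cast
    rfl
  have hχ_inv (j : ZMod n) : w ^ (-(2 * (b : ℤ) * (j.val : ℤ))) =
      (AddChar.zmodChar n hw.pow_eq_one ^ (2 * b))⁻¹ j := by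
    rw [_root_.zpow_neg, hχ, AddChar.inv_apply']
  simp only [proj, twistedShift, EM, div_eq_mul_inv, mul_smul, ← smul_add,
    ← Finset.sum_add_distrib, hχ, hχ_inv, sub_eq_add_neg, ZMod.card]

end

/-- each `p^α`, `α ∈ S`, is idempotent. -/
theorem stmt3 (n : ℕ) [NeZero n] (hodd : Odd n) (w : ℂ) (hw : IsPrimitiveRoot w n)
    (a b : ℕ) (hab : (a, b) ∈ idxS n) :
    proj n w a b * proj n w a b = proj n w a b := by
  have hn : (Fintype.card (ZMod n) : ℂ) ≠ 0 := by simp [ZMod.card, NeZero.ne n]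
  change IsIdempotentElem _
  simp only [idxS, mem_filter, mem_product, mem_range] at hab
  rw [proj_eq hw]
  obtain ⟨-, ⟨rfl, rfl⟩ | ⟨rfl, hb, hbn⟩ | ⟨ha, han⟩⟩ := hab
  · rw [Nat.cast_zero, neg_zero, mul_zero, pow_zero, inv_one, ← two_smul ℂ, smul_smul, ccoef,
      if_pos ⟨rfl, rfl⟩, one_div_mul_cancel two_ne_zero, one_smul]
    exact isIdempotentElem_inv_card_smul_twistedShift hn _ _
  · rw [ccoef, if_neg (by omega), one_smul]
    refine isIdempotentElem_inv_card_smul_twistedShift_add hn (Or.inr (zmodChar_pow_ne_inv hw ?_))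
    intro h4b
    have hcop : n.Coprime 2 := hodd.coprime_two_right
    have := Nat.le_of_dvd (by omega) (hcop.dvd_of_dvd_mul_left (hcop.dvd_of_dvd_mul_left h4b))
    omega
  · rw [ccoef, if_neg (by omega), one_smul]
    exact isIdempotentElem_inv_card_smul_twistedShift_add hn
      (Or.inl (ZMod.natCast_ne_neg_natCast ha (by omega)))
end

section
/- Let n be odd and w a primitive n-th root of unity. The projection operators p^α on ℂⁿ ⊗ ℂⁿ defined by p^{(a,b)} = (c^{(a,b)}/n) Σ_{i,j=0}^{n-1} [ w^{2bj} e_{i+a+j,i+a} ⊗ e_{i+j,i} + w^{-2bj} e_{i-a+j,i-a} ⊗ e_{i+j,i} ] are mutually orthogonal: p^α p^β = 0 for α ≠ β in the index set S. -/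
open Matrix Kronecker Finset

/-!
Over a finite commutative ring `R` with a primitive additive character `ψ`, let
`T_x = phaseShift ψ x = Σ_{i,j} ψ(x₂ j) e_{i+x₁+j, i+x₁} ⊗ e_{i+j, i}` for `x ∈ R × R`.
Then `T_x T_y = 0` whenever `x ≠ y`: if the shifts `x₁ ≠ y₁` differ the supports do not match,
and if `x₁ = y₁` every entry of the product is a multiple of the character sum
`Σ_v ψ((y₂ - x₂) v) = 0`. With `R = ZMod n` and `ψ(j) = w^j`, the projection `p^{(a,b)}` is
`(c/n) (T_ℓ + T_{-ℓ})` for the label `ℓ = (a, 2b)`. For odd `n` the labels `±ℓ(α)`, `α ∈ S`, are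
pairwise distinct (2 is invertible and `S` takes only one of `a, -a`, resp. of `b, -b` when
`a = 0`), so all cross products vanish.
-/

section PhaseShift

variable {R K : Type*} [CommRing R] [Fintype R] [CommRing K]

lemma AddChar.sum_mul_sub_mul_mul_sub_eq_zero [IsDomain K] {ψ : AddChar R K}
    (hψ : ψ.IsPrimitive) {b b' : R} (h : b ≠ b') (q s : R) :
    ∑ v, ψ (b * (q - v)) * ψ (b' * (v - s)) = 0 := by
  have hshift : ∀ v, ψ (b * (q - v)) * ψ (b' * (v - s)) =
      ψ (b * q - b' * s) * ψ.mulShift (b' - b) v := by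
    intro v
    rw [AddChar.mulShift_apply, ← AddChar.map_add_eq_mul, ← AddChar.map_add_eq_mul]
    ring_nf
  rw [Fintype.sum_congr _ _ hshift, ← mul_sum,
    AddChar.sum_eq_zero_of_ne_one (hψ (sub_ne_zero.2 h.symm)), mul_zero]

variable [DecidableEq R]

noncomputable def phaseShift (ψ : AddChar R K) (x : R × R) : Matrix (R × R) (R × R) K :=
  ∑ i, ∑ j, ψ (x.2 * j) • (single (i + x.1 + j) (i + x.1) 1 ⊗ₖ single (i + j) i 1)

lemma phaseShift_apply (ψ : AddChar R K) (x : R × R) (p q u v : R) :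
    phaseShift ψ x (p, q) (u, v) =
      if p = q + x.1 ∧ u = v + x.1 then ψ (x.2 * (q - v)) else 0 := by
  simp only [phaseShift, single_kronecker_single, Matrix.sum_apply, Matrix.smul_apply,
    single_apply, Prod.mk.injEq, smul_eq_mul, mul_ite, mul_one, mul_zero]
  rw [Fintype.sum_eq_single v fun i hi => sum_eq_zero fun j _ => if_neg fun h => hi h.2.2,
    Fintype.sum_eq_single (q - v) fun j hj => if_neg fun h => hj (eq_sub_of_add_eq' h.1.2)]
  simp only [add_sub_cancel, and_true, show v + x.1 + (q - v) = q + x.1 by abel, eq_comm]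

lemma phaseShift_mul_apply (ψ : AddChar R K) (x y : R × R) (p q r s : R) :
    (phaseShift ψ x * phaseShift ψ y) (p, q) (r, s) =
      if x.1 = y.1 ∧ p = q + x.1 ∧ r = s + y.1 then
        ∑ v, ψ (x.2 * (q - v)) * ψ (y.2 * (v - s)) else 0 := by
  obtain ⟨A, B⟩ := x
  obtain ⟨A', B'⟩ := y
  simp only [mul_apply, Fintype.sum_prod_type, phaseShift_apply]
  rw [Finset.sum_comm]
  simp only [ite_mul, zero_mul, mul_ite, mul_zero, ite_and, sum_ite_eq', mem_univ, if_true,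
    add_right_inj]
  by_cases hA : A = A'
  · subst hA
    by_cases hp : p = q + A <;> by_cases hr : r = s + A <;> simp [hp, hr]
  · simp [hA, Ne.symm hA]

variable [IsDomain K] {ψ : AddChar R K}

lemma phaseShift_mul_phaseShift_of_ne (hψ : ψ.IsPrimitive) {x y : R × R} (h : x ≠ y) :
    phaseShift ψ x * phaseShift ψ y = 0 := by
  ext ⟨p, q⟩ ⟨r, s⟩
  rw [phaseShift_mul_apply, Matrix.zero_apply]
  split_ifs with hxy
  · exact AddChar.sum_mul_sub_mul_mul_sub_eq_zero hψ (fun h₂ => h (Prod.ext hxy.1 h₂)) q s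
  · rfl

lemma phaseShift_add_neg_mul_phaseShift_add_neg (hψ : ψ.IsPrimitive) {x y : R × R}
    (hne : x ≠ y) (hne_neg : x ≠ -y) :
    (phaseShift ψ x + phaseShift ψ (-x)) * (phaseShift ψ y + phaseShift ψ (-y)) = 0 := by
  have hneg_ne : -x ≠ y := fun h => hne_neg (neg_eq_iff_eq_neg.1 h)
  simp only [add_mul, mul_add, phaseShift_mul_phaseShift_of_ne hψ hne,
    phaseShift_mul_phaseShift_of_ne hψ hne_neg, phaseShift_mul_phaseShift_of_ne hψ hneg_ne,
    phaseShift_mul_phaseShift_of_ne hψ (neg_injective.ne hne), add_zero]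

end PhaseShift

section RootOfUnity

variable {n : ℕ} [NeZero n] {K : Type*} [Field K] {w : K}

lemma AddChar.zmodChar_intCast (hw : w ^ n = 1) (k : ℤ) : zmodChar n hw k = w ^ k := by
  have hone : zmodChar n hw 1 = w := by simpa using zmodChar_apply' hw 1
  rw [← zsmul_one, AddChar.map_zsmul_eq_zpow, hone]

lemma AddChar.zmodChar_isPrimitive (hw : IsPrimitiveRoot w n) :
    (zmodChar n hw.pow_eq_one).IsPrimitive := by
  refine zmod_char_primitive_of_eq_one_only_at_zero n _ fun a ha => ?_
  rw [zmodChar_apply, hw.pow_eq_one_iff_dvd] at ha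
  exact (ZMod.val_eq_zero a).1 (Nat.eq_zero_of_dvd_of_lt ha a.val_lt)

end RootOfUnity

/-- The label `ℓ(a, b) = (a, 2b)`: shift and frequency of the first summand of `p^{(a,b)}`. -/
def label (n : ℕ) (p : ℕ × ℕ) : ZMod n × ZMod n := (p.1, 2 * p.2)

lemma proj_eq_smul_phaseShift_add_neg {n : ℕ} [NeZero n] {w : ℂ} (hw : w ^ n = 1) (a b : ℕ) :
    proj n w a b = (ccoef a b / n) •
      (phaseShift (AddChar.zmodChar n hw) (label n (a, b)) +
        phaseShift (AddChar.zmodChar n hw) (-label n (a, b))) := by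
  simp only [proj, phaseShift, label, EM, ← sum_add_distrib, Prod.fst_neg, Prod.snd_neg,
    ← sub_eq_add_neg]
  congr 1
  refine sum_congr rfl fun i _ => sum_congr rfl fun j _ => ?_
  rw [← AddChar.zmodChar_intCast hw, ← AddChar.zmodChar_intCast hw]
  push_cast [ZMod.natCast_val, ZMod.cast_id]
  ring_nf

lemma bounds_of_mem_idxS {n : ℕ} {p : ℕ × ℕ} (hp : p ∈ idxS n) :
    p.1 ≤ (n - 1) / 2 ∧ p.2 < n ∧ (p.1 = 0 → p.2 ≤ (n - 1) / 2) := by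
  simp only [idxS, mem_filter, mem_product, mem_range] at hp
  omega

lemma ZMod.eq_zero_of_natCast_eq_neg_natCast {n : ℕ} [NeZero n] {a c : ℕ}
    (h : (a : ZMod n) = -c) (ha : a ≤ (n - 1) / 2) (hc : c ≤ (n - 1) / 2) : a = 0 ∧ c = 0 := by
  have hdvd : n ∣ a + c := (ZMod.natCast_eq_zero_iff _ _).1 (by push_cast; rw [h, neg_add_cancel])
  have := Nat.eq_zero_of_dvd_of_lt hdvd (by have := NeZero.ne n; omega)
  omega

lemma ZMod.isUnit_two_of_odd {n : ℕ} (hn : Odd n) : IsUnit (2 : ZMod n) := by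
  exact_mod_cast (ZMod.isUnit_iff_coprime 2 n).2 (Nat.coprime_two_left.2 hn)

lemma label_injOn {n : ℕ} (hn : Odd n) : Set.InjOn (label n) (idxS n) := by
  intro p hp q hq h
  obtain ⟨hp₁, hp₂, -⟩ := bounds_of_mem_idxS hp
  obtain ⟨hq₁, hq₂, -⟩ := bounds_of_mem_idxS hq
  obtain ⟨h₁, h₂⟩ : (p.1 : ZMod n) = q.1 ∧ (2 * p.2 : ZMod n) = 2 * q.2 := Prod.ext_iff.1 h
  have h₂' : (p.2 : ZMod n) = q.2 := (ZMod.isUnit_two_of_odd hn).mul_left_cancel h₂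
  rw [ZMod.natCast_eq_natCast_iff'] at h₁ h₂'
  rw [Nat.mod_eq_of_lt (by omega), Nat.mod_eq_of_lt (by omega)] at h₁
  rw [Nat.mod_eq_of_lt hp₂, Nat.mod_eq_of_lt hq₂] at h₂'
  exact Prod.ext h₁ h₂'

lemma eq_of_label_eq_neg_label {n : ℕ} [NeZero n] (hn : Odd n) {p q : ℕ × ℕ}
    (hp : p ∈ idxS n) (hq : q ∈ idxS n) (h : label n p = -label n q) : p = q := by
  obtain ⟨hp₁, -, hp₂⟩ := bounds_of_mem_idxS hp
  obtain ⟨hq₁, -, hq₂⟩ := bounds_of_mem_idxS hq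
  obtain ⟨h₁, h₂⟩ : (p.1 : ZMod n) = -q.1 ∧ (2 * p.2 : ZMod n) = -(2 * q.2) :=
    Prod.ext_iff.1 h
  obtain ⟨hp₀, hq₀⟩ := ZMod.eq_zero_of_natCast_eq_neg_natCast h₁ hp₁ hq₁
  have h₂' : (p.2 : ZMod n) = -q.2 :=
    (ZMod.isUnit_two_of_odd hn).mul_left_cancel (by simpa [mul_neg] using h₂)
  obtain ⟨hp₀', hq₀'⟩ := ZMod.eq_zero_of_natCast_eq_neg_natCast h₂' (hp₂ hp₀) (hq₂ hq₀)
  exact Prod.ext (hp₀.trans hq₀.symm) (hp₀'.trans hq₀'.symm)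

/-- the projections `p^α`, `α ∈ S`, are mutually orthogonal. -/
theorem stmt4 (n : ℕ) [NeZero n] (hodd : Odd n) (w : ℂ) (hw : IsPrimitiveRoot w n)
    (a b c d : ℕ) (hab : (a, b) ∈ idxS n) (hcd : (c, d) ∈ idxS n)
    (hne : (a, b) ≠ (c, d)) :
    proj n w a b * proj n w c d = 0 := by
  have hlabel : label n (a, b) ≠ label n (c, d) := fun h => hne (label_injOn hodd hab hcd h)
  have hlabel_neg : label n (a, b) ≠ -label n (c, d) :=
    fun h => hne (eq_of_label_eq_neg_label hodd hab hcd h)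
  rw [proj_eq_smul_phaseShift_add_neg hw.pow_eq_one,
    proj_eq_smul_phaseShift_add_neg hw.pow_eq_one, smul_mul_smul_comm,
    phaseShift_add_neg_mul_phaseShift_add_neg (AddChar.zmodChar_isPrimitive hw) hlabel hlabel_neg,
    smul_zero]
end

section
/- Let n be odd and w a primitive n-th root of unity. The projection operators p^α, α ∈ S, on ℂⁿ ⊗ ℂⁿ sum to the identity: Σ_{α ∈ S} p^α = I ⊗ I. -/
/-!
With `ψ x = w ^ x.val` the additive character of `ZMod n` attached to `w`, each projection splits
as `p^(a,b) = (c^(a,b) / n) (Q(a,b) + Q(-a,-b))`, where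
`Q(a,b) = Σ_{i,j} ψ(2bj) e_{i+a+j,i+a} ⊗ e_{i+j,i}`.
Since `n` is odd, `x ↦ ψ (2x)` is still primitive, so summing over `b` kills every term with
`j ≠ 0` and `Σ_{β ∈ (ZMod n)²} Q β = n • 1`.
Reduced mod `n`, the index set `S` is a fundamental domain for `β ↦ -β` on `(ZMod n)²` that
meets its negative only in `0`; the weight `c^(0,0) = 1/2` compensates for `Q 0` being
counted twice.
-/

open Matrix Kronecker Finset

namespace AddChar

lemma IsPrimitive.mulShift_of_isUnit {R R' : Type*} [CommRing R] [CommMonoid R']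
    {ψ : AddChar R R'} (hψ : ψ.IsPrimitive) {r : R} (hr : IsUnit r) :
    (ψ.mulShift r).IsPrimitive := fun a ha => by
  rw [mulShift_mulShift]
  exact hψ ((hr.mul_right_eq_zero).not.mpr ha)

lemma zmodChar_intCast_s5 {C : Type*} [CommGroupWithZero C] {n : ℕ} [NeZero n] {ζ : C}
    (hζ : ζ ^ n = 1) (m : ℤ) : zmodChar n hζ (m : ZMod n) = ζ ^ m := by
  cases m with
  | ofNat k => simp [zmodChar_apply']
  | negSucc k =>
    rw [Int.cast_negSucc, map_neg_eq_inv, zmodChar_apply', zpow_negSucc]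

end AddChar

lemma Finset.sum_add_apply_neg_of_fundamentalDomain {G M : Type*} [AddGroup G] [Fintype G]
    [DecidableEq G] [AddCommMonoid M] {T : Finset G} (hcover : ∀ x, x ∈ T ∨ -x ∈ T)
    (hdisj : ∀ x ∈ T, -x ∈ T → x = 0) (f : G → M) :
    ∑ x ∈ T, (f x + f (-x)) = ∑ x, f x + f 0 := by
  have h0 : (0 : G) ∈ T := by simpa using hcover 0
  have hneg : ∑ x ∈ T, f (-x) = ∑ x ∈ T.map (Equiv.neg G).toEmbedding, f x := by
    rw [sum_map]; rfl
  have hunion : T ∪ T.map (Equiv.neg G).toEmbedding = univ := by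
    refine eq_univ_of_forall fun x => ?_
    simpa [mem_union, mem_map_equiv] using hcover x
  have hinter : T ∩ T.map (Equiv.neg G).toEmbedding = {0} := by
    ext x
    simp only [mem_inter, mem_map_equiv, Equiv.neg_symm, Equiv.neg_apply, mem_singleton]
    exact ⟨fun h => hdisj x h.1 h.2, by rintro rfl; simpa using h0⟩
  rw [sum_add_distrib, hneg, ← sum_union_inter, hunion, hinter, sum_singleton]

section OneSided

variable {n : ℕ} [NeZero n] {R : Type*} [CommRing R]

noncomputable def oneSidedProj (ψ : AddChar (ZMod n) R) (β : ZMod n × ZMod n) :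
    Matrix (ZMod n × ZMod n) (ZMod n × ZMod n) R :=
  ∑ i : ZMod n, ∑ j : ZMod n, ψ (β.2 * j) • single (i + β.1 + j, i + j) (i + β.1, i) 1

variable [IsDomain R] {ψ : AddChar (ZMod n) R}

lemma sum_oneSidedProj_snd (hψ : ψ.IsPrimitive) (a : ZMod n) :
    ∑ b, oneSidedProj ψ (a, b) = (n : R) • ∑ i : ZMod n, single (i + a, i) (i + a, i) 1 := by
  have character_sum (j : ZMod n) : ∑ b : ZMod n, ψ (b * j) = if j = 0 then (n : R) else 0 := by
    rw [AddChar.sum_mulShift j hψ, ZMod.card, apply_ite Nat.cast, Nat.cast_zero]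
  simp only [oneSidedProj]
  rw [sum_comm, smul_sum]
  refine sum_congr rfl fun i _ => ?_
  rw [sum_comm]
  simp only [← sum_smul, character_sum, ite_smul, zero_smul, sum_ite_eq', mem_univ, if_true,
    add_zero]

lemma sum_oneSidedProj (hψ : ψ.IsPrimitive) : ∑ β, oneSidedProj ψ β = (n : R) • 1 := by
  rw [Fintype.sum_prod_type]
  simp only [sum_oneSidedProj_snd hψ, ← smul_sum]
  congr 1
  rw [sum_comm]
  have shift (i : ZMod n) :
      ∑ a : ZMod n, single (i + a, i) (i + a, i) (1 : R) = ∑ r, single (r, i) (r, i) 1 :=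
    Fintype.sum_equiv (Equiv.addLeft i) _ _ fun _ => rfl
  simp only [shift]
  rw [sum_comm, ← Fintype.sum_prod_type', sum_single_one]

end OneSided

section HalfPlane

variable {n : ℕ} [NeZero n]

def halfPlane (n : ℕ) [NeZero n] : Finset (ZMod n × ZMod n) :=
  univ.filter fun β => β.1.val ≤ (n - 1) / 2 ∧ (β.1 = 0 → β.2.val ≤ (n - 1) / 2)

lemma mem_halfPlane_or_neg_mem (hodd : Odd n) (β : ZMod n × ZMod n) :
    β ∈ halfPlane n ∨ -β ∈ halfPlane n := by
  obtain ⟨k, rfl⟩ := hodd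
  have := β.1.val_lt
  have := β.2.val_lt
  simp only [halfPlane, mem_filter, mem_univ, true_and, Prod.fst_neg, Prod.snd_neg,
    ZMod.neg_val, neg_eq_zero]
  split_ifs <;> simp_all <;> omega

lemma eq_zero_of_mem_halfPlane_of_neg_mem {β : ZMod n × ZMod n} (h : β ∈ halfPlane n)
    (hneg : -β ∈ halfPlane n) : β = 0 := by
  obtain ⟨x, y⟩ := β
  simp only [halfPlane, mem_filter, mem_univ, true_and, Prod.fst_neg, Prod.snd_neg,
    ZMod.neg_val, neg_eq_zero] at h hneg
  have := x.val_lt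
  split_ifs at hneg with hx hy
  · exact Prod.ext hx hy
  · have := y.val_lt
    simp only [hx, forall_const] at h hneg
    omega
  all_goals omega

lemma sum_idxS_eq_sum_halfPlane {M : Type*} [AddCommMonoid M] (g : ZMod n × ZMod n → M) :
    ∑ α ∈ idxS n, g ((α.1 : ZMod n), (α.2 : ZMod n)) = ∑ β ∈ halfPlane n, g β := by
  refine sum_nbij' (fun α => ((α.1 : ZMod n), (α.2 : ZMod n))) (fun β => (β.1.val, β.2.val))
    ?_ ?_ ?_ ?_ fun _ _ => rfl
  · intro α hα
    simp only [idxS, mem_filter, mem_product, mem_range, halfPlane, mem_univ, true_and] at hα ⊢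
    simp only [← ZMod.val_eq_zero, ZMod.val_cast_of_lt hα.1.1, ZMod.val_cast_of_lt hα.1.2]
    omega
  · intro β hβ
    simp only [idxS, mem_filter, mem_product, mem_range, halfPlane, mem_univ, true_and,
      ← ZMod.val_eq_zero] at hβ ⊢
    have := β.1.val_lt
    have := β.2.val_lt
    omega
  · intro α hα
    simp only [idxS, mem_filter, mem_product, mem_range] at hα
    simp [ZMod.val_cast_of_lt hα.1.1, ZMod.val_cast_of_lt hα.1.2]
  · intro β _
    simp

end HalfPlane

lemma sum_ccoef_smul {M : Type*} [AddCommGroup M] [Module ℂ M] {s : Finset (ℕ × ℕ)}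
    (h0 : (0, 0) ∈ s) (X : ℕ × ℕ → M) :
    ∑ α ∈ s, ccoef α.1 α.2 • X α = ∑ α ∈ s, X α - (1 / 2 : ℂ) • X (0, 0) := by
  have hrest : ∀ α ∈ s.erase (0, 0), ccoef α.1 α.2 • X α = X α := fun α hα => by
    rw [ccoef, if_neg fun h => (mem_erase.mp hα).1 (Prod.ext h.1 h.2), one_smul]
  rw [← add_sum_erase s _ h0, ← add_sum_erase s X h0, sum_congr rfl hrest, ccoef,
    if_pos ⟨rfl, rfl⟩]
  module

lemma EM_kronecker_EM {n : ℕ} [NeZero n] (i j k l : ZMod n) :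
    EM n i j ⊗ₖ EM n k l = single (i, k) (j, l) 1 := by
  rw [EM, EM, single_kronecker_single, mul_one]

lemma proj_eq_oneSidedProj {n : ℕ} [NeZero n] {w : ℂ} (hw : w ^ n = 1) (a b : ℕ) :
    proj n w a b = (n : ℂ)⁻¹ • ccoef a b •
      (oneSidedProj ((AddChar.zmodChar n hw).mulShift 2) (a, b)
        + oneSidedProj ((AddChar.zmodChar n hw).mulShift 2) (-((a, b) : ZMod n × ZMod n))) := by
  have phase {m : ℤ} {x : ZMod n} (h : (m : ZMod n) = 2 * x) :
      w ^ m = (AddChar.zmodChar n hw).mulShift 2 x := by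
    rw [AddChar.mulShift_apply, ← h, AddChar.zmodChar_intCast_s5]
  rw [proj, oneSidedProj, oneSidedProj, smul_smul, inv_mul_eq_div, ← sum_add_distrib]
  congr 1
  refine sum_congr rfl fun i _ => ?_
  rw [← sum_add_distrib]
  refine sum_congr rfl fun j _ => ?_
  rw [phase (x := (b : ZMod n) * j) (by push_cast [ZMod.natCast_val, ZMod.cast_id]; ring),
    phase (x := -(b : ZMod n) * j) (by push_cast [ZMod.natCast_val, ZMod.cast_id]; ring)]
  simp only [EM_kronecker_EM, Prod.fst_neg, Prod.snd_neg, sub_eq_add_neg]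

/-- the projections `p^α`, `α ∈ S`, sum to the identity on ℂⁿ ⊗ ℂⁿ. -/
theorem stmt5 (n : ℕ) [NeZero n] (hodd : Odd n) (w : ℂ) (hw : IsPrimitiveRoot w n) :
    ∑ α ∈ idxS n, proj n w α.1 α.2 = (1 : Matrix (ZMod n × ZMod n) (ZMod n × ZMod n) ℂ) := by
  set ψ := (AddChar.zmodChar n hw.pow_eq_one).mulShift 2
  have hψ : ψ.IsPrimitive :=
    (AddChar.zmodChar_primitive_of_primitive_root n hw).mulShift_of_isUnit
      ((ZMod.isUnit_iff_coprime 2 n).mpr (Nat.coprime_two_left.mpr hodd))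
  have h0 : ((0, 0) : ℕ × ℕ) ∈ idxS n := by simp [idxS, Nat.pos_of_neZero]
  have hn : (n : ℂ) ≠ 0 := Nat.cast_ne_zero.mpr (NeZero.ne n)
  simp only [proj_eq_oneSidedProj hw.pow_eq_one, ← smul_sum]
  rw [sum_ccoef_smul h0,
    sum_idxS_eq_sum_halfPlane fun β => oneSidedProj ψ β + oneSidedProj ψ (-β),
    sum_add_apply_neg_of_fundamentalDomain (mem_halfPlane_or_neg_mem hodd)
      (fun _ => eq_zero_of_mem_halfPlane_of_neg_mem), sum_oneSidedProj hψ]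
  simp only [Nat.cast_zero, neg_zero, ← Prod.zero_eq_mk]
  rw [smul_sub, smul_add, smul_smul, inv_mul_cancel₀ hn, one_smul]
  module
end

section
/- Let n ≥ 3 be odd, w a primitive n-th root of unity, and define g_{(a,j)}(z) = (1/n) Σ_{b=0}^{n-1} w^{2bj} ∏_{p=1}^{a} (z + w^{2(2p-1+b-a)})/(1 + z w^{2(2p-1+b-a)}) for 0 ≤ a,j ≤ n-1. Then the matrix R(z) = Σ_{i,j,a=0}^{n-1} g_{(a,j)}(z) e_{i+j,i+a} ⊗ e_{i+a+j,i} satisfies lim_{z→0} R(z) = Σ_{i,j=0}^{n-1} e_{i+j,i-j} ⊗ e_{i,i}. -/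
open Matrix Kronecker Finset

/-- `g_{(a,j)}(z) = (1/n) Σ_{b=0}^{n-1} w^{2bj} ∏_{p=1}^{a}
(z + w^{2(2p-1+b-a)})/(1 + z w^{2(2p-1+b-a)})`. -/
noncomputable def gfun (n : ℕ) (w : ℂ) (a : ℕ) (j : ℤ) (z : ℂ) : ℂ :=
  (1 / (n : ℂ)) * ∑ b ∈ Finset.range n, w ^ (2 * (b : ℤ) * j) *
    ∏ p ∈ Finset.range a,
      (z + w ^ (2 * (2 * ((p : ℤ) + 1) - 1 + (b : ℤ) - (a : ℤ)))) /
        (1 + z * w ^ (2 * (2 * ((p : ℤ) + 1) - 1 + (b : ℤ) - (a : ℤ))))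

/-- `R(z) = Σ_{i,j,a=0}^{n-1} g_{(a,j)}(z) e_{i+j,i+a} ⊗ e_{i+a+j,i}`. -/
noncomputable def Rmat (n : ℕ) [NeZero n] (w z : ℂ) :
    Matrix (ZMod n × ZMod n) (ZMod n × ZMod n) ℂ :=
  ∑ i : ZMod n, ∑ j ∈ Finset.range n, ∑ a ∈ Finset.range n,
    gfun n w a (j : ℤ) z •
      (EM n (i + (j : ZMod n)) (i + (a : ZMod n)) ⊗ₖ EM n (i + (a : ZMod n) + (j : ZMod n)) i)

lemma gauss_int (a : ℕ) : (∑ p ∈ Finset.range a, (p : ℤ)) * 2 = a * (a - 1) := by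
  induction a with
  | zero => simp
  | succ a ih => rw [Finset.sum_range_succ]; push_cast; push_cast at ih; ring_nf; ring_nf at ih; linarith

lemma prod_zpow_eq {ι : Type*} (w : ℂ) (hw : w ≠ 0) (s : Finset ι) (f : ι → ℤ) :
    ∏ p ∈ s, w ^ f p = w ^ (∑ p ∈ s, f p) := by
  induction s using Finset.cons_induction with
  | empty => simp
  | cons a s ha ih => rw [Finset.prod_cons, Finset.sum_cons, ih, zpow_add₀ hw]

lemma exp_sum (a : ℕ) (b : ℤ) :
    ∑ p ∈ Finset.range a, (2 * (2 * ((p : ℤ) + 1) - 1 + b - (a : ℤ))) = 2 * a * b := by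
  have h := gauss_int a
  have : ∑ p ∈ Finset.range a, (2 * (2 * ((p : ℤ) + 1) - 1 + b - (a : ℤ)))
      = ∑ p ∈ Finset.range a, ((4 : ℤ) * p + (2 + 2 * b - 2 * a)) := by
    apply Finset.sum_congr rfl; intro p _; ring
  rw [this, Finset.sum_add_distrib, Finset.sum_const, ← Finset.mul_sum]
  simp only [Finset.card_range, nsmul_eq_mul]
  nlinarith [h]

lemma gfun_zero (n : ℕ) [NeZero n] (hodd : Odd n) (w : ℂ) (hw : IsPrimitiveRoot w n)
    (a : ℕ) (j : ℤ) :
    gfun n w a j 0 = if ((a : ZMod n) = -(j : ZMod n)) then 1 else 0 := by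
  have hn0 : (n : ℕ) ≠ 0 := NeZero.ne n
  have hw0 : w ≠ 0 := hw.ne_zero hn0
  have hiff : (w ^ (2 * (j + (a : ℤ))) = 1) ↔ ((a : ZMod n) = -(j : ZMod n)) := by
    rw [hw.zpow_eq_one_iff_dvd]
    have hc : IsCoprime (n : ℤ) 2 := by
      rw [show (2 : ℤ) = ((2 : ℕ) : ℤ) by norm_num, Nat.isCoprime_iff_coprime]
      exact Nat.coprime_two_right.mpr hodd
    constructor
    · intro h
      have h2 : (n : ℤ) ∣ (j + a) := hc.dvd_of_dvd_mul_left h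
      have := (ZMod.intCast_zmod_eq_zero_iff_dvd (j + a) n).mpr h2
      push_cast at this
      rw [eq_neg_iff_add_eq_zero, add_comm]
      exact this
    · intro h
      have : ((j + a : ℤ) : ZMod n) = 0 := by
        push_cast
        rw [eq_neg_iff_add_eq_zero, add_comm] at h
        exact h
      exact Dvd.dvd.mul_left ((ZMod.intCast_zmod_eq_zero_iff_dvd (j + a) n).mp this) 2
  have hterm : ∀ b ∈ Finset.range n,
      w ^ (2 * (b : ℤ) * j) * ∏ p ∈ Finset.range a,
        ((0 : ℂ) + w ^ (2 * (2 * ((p : ℤ) + 1) - 1 + (b : ℤ) - (a : ℤ)))) /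
          (1 + 0 * w ^ (2 * (2 * ((p : ℤ) + 1) - 1 + (b : ℤ) - (a : ℤ))))
      = (w ^ (2 * (j + (a : ℤ)))) ^ b := by
    intro b _
    have : ∀ p ∈ Finset.range a,
        ((0 : ℂ) + w ^ (2 * (2 * ((p : ℤ) + 1) - 1 + (b : ℤ) - (a : ℤ)))) /
          (1 + 0 * w ^ (2 * (2 * ((p : ℤ) + 1) - 1 + (b : ℤ) - (a : ℤ))))
        = w ^ (2 * (2 * ((p : ℤ) + 1) - 1 + (b : ℤ) - (a : ℤ))) := by
      intro p _; simp
    rw [Finset.prod_congr rfl this, prod_zpow_eq w hw0, exp_sum,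
      ← zpow_add₀ hw0]
    rw [show 2 * (b : ℤ) * j + 2 * (a : ℤ) * (b : ℤ) = (2 * (j + (a : ℤ))) * (b : ℤ) by ring,
      _root_.zpow_mul, zpow_natCast]
  unfold gfun
  rw [Finset.sum_congr rfl hterm]
  set x := w ^ (2 * (j + (a : ℤ))) with hx
  by_cases h1 : x = 1
  · rw [if_pos (hiff.mp h1), h1]
    simp [Nat.cast_ne_zero.mpr hn0]
  · rw [if_neg (fun hc => h1 (hiff.mpr hc))]
    rw [geom_sum_eq h1]
    have hxn : x ^ n = 1 := by
      rw [hx, ← zpow_natCast, ← _root_.zpow_mul, mul_comm, _root_.zpow_mul, zpow_natCast,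
        hw.pow_eq_one, _root_.one_zpow]
    rw [hxn]
    simp

lemma sum_range_zmod (n : ℕ) [NeZero n] {M : Type*} [AddCommMonoid M] (f : ZMod n → M) :
    ∑ j ∈ Finset.range n, f (j : ZMod n) = ∑ x : ZMod n, f x := by
  apply Finset.sum_nbij' (fun j => ((j : ℕ) : ZMod n)) (fun x => x.val)
  · intro a _; exact Finset.mem_univ _
  · intro x _; exact Finset.mem_range.mpr (ZMod.val_lt x)
  · intro a ha; exact ZMod.val_cast_of_lt (Finset.mem_range.mp ha)
  · intro x _; exact ZMod.natCast_rightInverse x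
  · intro a _; rfl

lemma Rmat_zero (n : ℕ) [NeZero n] (hodd : Odd n) (w : ℂ) (hw : IsPrimitiveRoot w n) :
    Rmat n w 0 = ∑ i : ZMod n, ∑ j : ZMod n, EM n (i + j) (i - j) ⊗ₖ EM n i i := by
  unfold Rmat
  apply Finset.sum_congr rfl
  intro i _
  have inner : ∀ j : ℕ, j ∈ Finset.range n →
      (∑ a ∈ Finset.range n, gfun n w a (j : ℤ) 0 •
        (EM n (i + (j : ZMod n)) (i + (a : ZMod n)) ⊗ₖ EM n (i + (a : ZMod n) + (j : ZMod n)) i))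
      = EM n (i + (j : ZMod n)) (i - (j : ZMod n)) ⊗ₖ EM n i i := by
    intro j _
    have : ∀ a ∈ Finset.range n, gfun n w a (j : ℤ) 0 •
        (EM n (i + (j : ZMod n)) (i + (a : ZMod n)) ⊗ₖ EM n (i + (a : ZMod n) + (j : ZMod n)) i)
        = (fun y : ZMod n => if y = -((j : ℕ) : ZMod n) then
            EM n (i + (j : ZMod n)) (i + y) ⊗ₖ EM n (i + y + (j : ZMod n)) i else 0) ((a : ZMod n)) := by
      intro a _
      rw [gfun_zero n hodd w hw a (j : ℤ)]
      have hcast : (((j : ℤ) : ZMod n)) = ((j : ℕ) : ZMod n) := by push_cast; rfl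
      rw [hcast, ite_smul, one_smul, zero_smul]
    rw [Finset.sum_congr rfl this, sum_range_zmod n (fun y : ZMod n => if y = -((j : ℕ) : ZMod n) then
      EM n (i + (j : ZMod n)) (i + y) ⊗ₖ EM n (i + y + (j : ZMod n)) i else 0),
      Finset.sum_ite_eq' Finset.univ]
    simp only [Finset.mem_univ, if_true]
    have h1 : i + -((j : ℕ) : ZMod n) = i - ((j : ℕ) : ZMod n) := by ring
    rw [h1, sub_add_cancel]
  rw [Finset.sum_congr rfl inner, sum_range_zmod n (fun y : ZMod n => EM n (i + y) (i - y) ⊗ₖ EM n i i)]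

/-- `lim_{z→0} R(z) = Σ_{i,j} e_{i+j,i-j} ⊗ e_{i,i}`, the representation
`(π_n⁺ ⊗ π_n⁺)𝓡` of the canonical element of `D(D_n)`. -/
theorem stmt6 (n : ℕ) [NeZero n] (hn : 3 ≤ n) (hodd : Odd n)
    (w : ℂ) (hw : IsPrimitiveRoot w n) :
    Filter.Tendsto (fun z => Rmat n w z) (nhdsWithin 0 {(0 : ℂ)}ᶜ)
      (nhds (∑ i : ZMod n, ∑ j : ZMod n, EM n (i + j) (i - j) ⊗ₖ EM n i i)) := by
  have hg : ∀ (a : ℕ) (j : ℤ), Filter.Tendsto (fun z => gfun n w a j z) (nhds 0)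
      (nhds (gfun n w a j 0)) := by
    intro a j
    unfold gfun
    apply Filter.Tendsto.mul tendsto_const_nhds
    apply tendsto_finset_sum
    intro b _
    apply Filter.Tendsto.mul tendsto_const_nhds
    apply tendsto_finset_prod
    intro p _
    apply Filter.Tendsto.div
    · exact Filter.Tendsto.add Filter.tendsto_id tendsto_const_nhds
    · exact Filter.Tendsto.add tendsto_const_nhds (Filter.Tendsto.mul Filter.tendsto_id tendsto_const_nhds)
    · simp
  have hR : Filter.Tendsto (fun z => Rmat n w z) (nhds 0) (nhds (Rmat n w 0)) := by
    unfold Rmat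
    apply tendsto_finset_sum
    intro i _
    apply tendsto_finset_sum
    intro j _
    apply tendsto_finset_sum
    intro a _
    exact Filter.Tendsto.smul (hg a (j : ℤ)) tendsto_const_nhds
  rw [← Rmat_zero n hodd w hw]
  exact hR.mono_left nhdsWithin_le_nhds
end

section
/- Let n ≥ 3 be odd, w a primitive n-th root of unity, and g_{(a,j)}(z) as above. Then R(z) = Σ_{i,j,a=0}^{n-1} g_{(a,j)}(z) e_{i+j,i+a} ⊗ e_{i+a+j,i} is symmetric: R(z)^t = R(z) for all z ∈ ℂ where it is defined. -/
open Matrix Kronecker Finset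

/-! The substitution `(i, j, a) ↦ (i + a + j, -j, -a)` carries the terms of `R(z)ᵀ` to
those of `R(z)`, so it suffices that `g_{(-a,-j)} = g_{(a,j)}`. Put
`f(c) = (z + w^{2c}) / (1 + z w^{2c})`; then `f(c) f(-c) = 1` and `f(0) = 1`. As `n` is odd,
`2p - 1 + c` runs over all residues mod `n` for `p = 1, …, n`, and pairing each residue with its
negative gives `∏_{p=1}^{n} f(2p - 1 + c) = 1`. Splitting this full product after `a` factors
turns the product in `g_{(n-a,·)}` at `-b` into the one in `g_{(a,·)}` at `b`, and the
substitution `b ↦ -b` in the sum defining `g` concludes. -/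

section ZModProducts

variable {n : ℕ} [NeZero n]

@[to_additive]
lemma prod_range_eq_prod_zmod_val {M : Type*} [CommMonoid M] (f : ℕ → M) :
    ∏ p ∈ range n, f p = ∏ x : ZMod n, f x.val :=
  (Finset.prod_nbij' (fun x : ZMod n => x.val) (fun p => (p : ZMod n)) (by simp [ZMod.val_lt])
    (by simp) (by simp) (fun p hp => ZMod.val_cast_of_lt (mem_range.1 hp)) (by simp)).symm

lemma prod_zmod_eq_one_of_mul_neg {M : Type*} [CommMonoid M] (hodd : Odd n) (f : ZMod n → M)
    (hf : ∀ x, f x * f (-x) = 1) (h0 : f 0 = 1) : ∏ x, f x = 1 := by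
  refine prod_involution (fun x _ => -x) (fun x _ => hf x) (fun x _ hx h => hx ?_) (by simp)
    (fun x _ => neg_neg x)
  obtain ⟨k, rfl⟩ := hodd
  rcases (ZMod.neg_eq_self_iff x).1 h with rfl | h2
  · exact h0
  · omega

end ZModProducts

section Moebius

variable {K : Type*} [Field K] {n : ℕ} [NeZero n] {w z : K}

lemma zpow_eq_zpow_of_modEq (hw : IsPrimitiveRoot w n) {c d : ℤ} (h : c ≡ d [ZMOD n]) :
    w ^ c = w ^ d := by
  rw [show d = c + (d - c) by ring, zpow_add₀ (hw.ne_zero (NeZero.ne n)),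
    (hw.zpow_eq_one_iff_dvd _).2 h.dvd, mul_one]

def moebiusFactor (w z : K) (c : ℤ) : K := (z + w ^ (2 * c)) / (1 + z * w ^ (2 * c))

lemma moebiusFactor_congr (hw : IsPrimitiveRoot w n) {c d : ℤ} (h : c ≡ d [ZMOD n]) :
    moebiusFactor w z c = moebiusFactor w z d := by
  rw [moebiusFactor, moebiusFactor, zpow_eq_zpow_of_modEq hw (h.mul_left 2)]

lemma moebiusFactor_zero (hz : 1 + z ≠ 0) : moebiusFactor w z 0 = 1 := by
  simp [moebiusFactor, add_comm z, hz]

lemma moebiusFactor_mul_neg (hw : w ≠ 0) (hz : ∀ c : ℤ, 1 + z * w ^ c ≠ 0) (c : ℤ) :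
    moebiusFactor w z c * moebiusFactor w z (-c) = 1 := by
  have h₁ := hz (2 * c)
  have h₂ := hz (-(2 * c))
  rw [_root_.zpow_neg] at h₂
  rw [moebiusFactor, moebiusFactor, mul_neg, _root_.zpow_neg, div_mul_div_comm,
    div_eq_one_iff_eq (mul_ne_zero h₁ h₂)]
  field_simp
  ring

lemma prod_range_moebiusFactor_odd_progression (hodd : Odd n) (hw : IsPrimitiveRoot w n)
    (hz : ∀ c : ℤ, 1 + z * w ^ c ≠ 0) (c : ℤ) :
    ∏ p ∈ range n, moebiusFactor w z (2 * ((p : ℤ) + 1) - 1 + c) = 1 := by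
  set F : ZMod n → K := fun x => moebiusFactor w z x.val
  have hF : ∀ d : ℤ, moebiusFactor w z d = F d := fun d =>
    moebiusFactor_congr hw ((ZMod.intCast_eq_intCast_iff _ _ _).1 (by simp))
  have h2 : IsUnit (2 : ZMod n) := by
    simpa using (ZMod.isUnit_iff_coprime 2 n).2 (Nat.coprime_two_left.2 hodd)
  have hbij : Function.Bijective fun x : ZMod n => 2 * x + (1 + c) :=
    Finite.injective_iff_bijective.1 fun x y hxy => h2.mul_left_cancel (add_right_cancel hxy)
  calc ∏ p ∈ range n, moebiusFactor w z (2 * ((p : ℤ) + 1) - 1 + c)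
      = ∏ x : ZMod n, F (2 * x + (1 + c)) := by
        rw [prod_range_eq_prod_zmod_val]
        refine prod_congr rfl fun x _ => ?_
        rw [hF]
        push_cast [ZMod.natCast_zmod_val]
        ring_nf
    _ = ∏ x : ZMod n, F x := Fintype.prod_bijective _ hbij _ _ fun _ => rfl
    _ = 1 := by
        refine prod_zmod_eq_one_of_mul_neg hodd F (fun x => ?_) ?_
        · rw [← moebiusFactor_mul_neg (hw.ne_zero (NeZero.ne n)) hz x.val, hF (-x.val)]
          simp [F]
        · simpa [F] using moebiusFactor_zero (w := w) (by simpa using hz 0)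

def moebiusProd (w z : K) (a : ℕ) (c : ℤ) : K :=
  ∏ p ∈ range a, moebiusFactor w z (2 * ((p : ℤ) + 1) - 1 + c - a)

lemma moebiusProd_congr (hw : IsPrimitiveRoot w n) (a : ℕ) {c d : ℤ} (h : c ≡ d [ZMOD n]) :
    moebiusProd w z a c = moebiusProd w z a d :=
  prod_congr rfl fun _ _ => moebiusFactor_congr hw ((h.add_left _).sub_right _)

lemma moebiusProd_mul_neg (hw : w ≠ 0) (hz : ∀ c : ℤ, 1 + z * w ^ c ≠ 0)
    (a : ℕ) (c : ℤ) :
    moebiusProd w z a c * moebiusProd w z a (-c) = 1 := by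
  unfold moebiusProd
  rw [← prod_range_reflect _ a, ← prod_mul_distrib]
  refine prod_eq_one fun p hp => ?_
  have hp : ((a - 1 - p : ℕ) : ℤ) = a - 1 - p := by have := mem_range.1 hp; omega
  rw [hp, mul_comm]
  convert moebiusFactor_mul_neg hw hz (2 * ((p : ℤ) + 1) - 1 + -c - a) using 3
  ring

lemma moebiusProd_mul_moebiusProd_sub (hodd : Odd n) (hw : IsPrimitiveRoot w n)
    (hz : ∀ c : ℤ, 1 + z * w ^ c ≠ 0) {a : ℕ} (ha : a ≤ n) (c : ℤ) :
    moebiusProd w z a c * moebiusProd w z (n - a) c = 1 := by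
  rw [← prod_range_moebiusFactor_odd_progression hodd hw hz (c - a), ← Nat.add_sub_cancel' ha,
    prod_range_add, Nat.add_sub_cancel' ha]
  congr 1
  · exact prod_congr rfl fun p _ => by ring_nf
  · refine prod_congr rfl fun p _ => moebiusFactor_congr hw (Int.modEq_iff_dvd.2 ⟨1, ?_⟩)
    push_cast [Nat.cast_sub ha]
    ring

lemma moebiusProd_sub_neg (hodd : Odd n) (hw : IsPrimitiveRoot w n)
    (hz : ∀ c : ℤ, 1 + z * w ^ c ≠ 0) {a : ℕ} (ha : a ≤ n) (c : ℤ) :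
    moebiusProd w z (n - a) (-c) = moebiusProd w z a c :=
  calc moebiusProd w z (n - a) (-c)
      = moebiusProd w z a c * moebiusProd w z a (-c) * moebiusProd w z (n - a) (-c) := by
        rw [moebiusProd_mul_neg (hw.ne_zero (NeZero.ne n)) hz, one_mul]
    _ = moebiusProd w z a c := by
        rw [mul_assoc, moebiusProd_mul_moebiusProd_sub hodd hw hz ha, mul_one]

end Moebius

lemma gfun_eq_sum_moebiusProd (n : ℕ) (w : ℂ) (a : ℕ) (j : ℤ) (z : ℂ) :
    gfun n w a j z = 1 / n * ∑ b ∈ range n, w ^ (2 * (b : ℤ) * j) * moebiusProd w z a b :=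
  rfl

section Rmatrix

variable {n : ℕ} [NeZero n]

lemma gfun_neg_val {w z : ℂ} (hodd : Odd n) (hw : IsPrimitiveRoot w n)
    (hz : ∀ c : ℤ, 1 + z * w ^ c ≠ 0) (a j : ZMod n) :
    gfun n w (-a).val (-j).val z = gfun n w a.val j.val z := by
  simp only [gfun_eq_sum_moebiusProd, sum_range_eq_sum_zmod_val]
  congr 1
  refine Fintype.sum_equiv (Equiv.neg _) _ _ fun b => ?_
  congr 1
  · refine zpow_eq_zpow_of_modEq hw ((ZMod.intCast_eq_intCast_iff _ _ _).1 ?_)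
    push_cast [ZMod.natCast_zmod_val, Equiv.neg_apply]
    ring
  · rcases eq_or_ne a 0 with rfl | ha
    · simp [moebiusProd]
    · have : NeZero a := ⟨ha⟩
      rw [ZMod.val_neg_of_ne_zero, ← moebiusProd_sub_neg hodd hw hz a.val_le]
      refine moebiusProd_congr hw _ ((ZMod.intCast_eq_intCast_iff _ _ _).1 ?_)
      push_cast [ZMod.natCast_zmod_val, Equiv.neg_apply]
      ring

lemma Rmat_eq_sum_zmod (w z : ℂ) :
    Rmat n w z = ∑ i : ZMod n, ∑ j : ZMod n, ∑ a : ZMod n,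
      gfun n w a.val j.val z • (EM n (i + j) (i + a) ⊗ₖ EM n (i + a + j) i) := by
  simp only [Rmat, sum_range_eq_sum_zmod_val, ZMod.natCast_zmod_val]

lemma transpose_EM_kronecker_EM (i j k l : ZMod n) :
    (EM n i j ⊗ₖ EM n k l)ᵀ = EM n j i ⊗ₖ EM n l k := by
  simp [← kroneckerMap_transpose, EM, transpose_single]

end Rmatrix

theorem stmt8_general (n : ℕ) [NeZero n] (hodd : Odd n)
    (w : ℂ) (hw : IsPrimitiveRoot w n) (z : ℂ)
    (hz : ∀ c : ℤ, 1 + z * w ^ c ≠ 0) :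
    (Rmat n w z)ᵀ = Rmat n w z := by
  have hbij : Function.Bijective fun x : ZMod n × ZMod n × ZMod n =>
      (x.1 + x.2.2 + x.2.1, -x.2.1, -x.2.2) :=
    Function.Involutive.bijective fun x => Prod.ext (by dsimp only; abel) (by simp)
  rw [Rmat_eq_sum_zmod]
  simp only [transpose_sum, transpose_smul, transpose_EM_kronecker_EM, ← Fintype.sum_prod_type']
  refine Fintype.sum_bijective _ hbij _ _ fun ⟨i, j, a⟩ => ?_
  simp only [gfun_neg_val hodd hw hz]
  congr 3 <;> ring

/-- `R(z)` is symmetric: `R(z)ᵀ = R(z)` wherever it is defined. -/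
theorem stmt8 (n : ℕ) [NeZero n] (hn : 3 ≤ n) (hodd : Odd n)
    (w : ℂ) (hw : IsPrimitiveRoot w n) (z : ℂ)
    (hz : ∀ c : ℤ, 1 + z * w ^ c ≠ 0) :
    (Rmat n w z)ᵀ = Rmat n w z :=
  stmt8_general n hodd w hw z hz
end

section
/- Let m ≥ 2 be even and w a primitive m-th root of unity (in the notation of section 5.2, w is a primitive m-th root of unity after relabeling). Then for all integers a, b, c: ∏_{p=c+1}^{c+m/2} (z + w^{2p-1+b-a})/(1 + z w^{2p-1+b-a}) = (-1)^{a+b+m/2}, for all z ∈ ℂ where the denominators are nonzero. -/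
open Finset

/-!
With `n = m / 2`, `ζ = w ^ 2` is a primitive `n`-th root of unity and the `p`-th exponent is
`u * ζ ^ p` with `u = w ^ (2c + 1 + b - a)`. Factoring `x ^ n - y ^ n` over the powers of `ζ`,
the numerator is `z ^ n - t` and the denominator `1 - z ^ n t`, where `t = (-u) ^ n`. Since
`w ^ n = -1`, `t = ±1`, so the numerator is `-t` times the denominator and the quotient is
`-t = (-1) ^ (a + b + n)`.
-/

theorem IsPrimitiveRoot.prod_range_sub_pow_mul {R : Type*} [CommRing R] [IsDomain R] {n : ℕ}
    {ζ : R} (hζ : IsPrimitiveRoot ζ n) (hn : 0 < n) (x y : R) :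
    ∏ i ∈ range n, (x - ζ ^ i * y) = x ^ n - y ^ n := by
  simpa [Polynomial.eval_prod] using
    congrArg (Polynomial.eval x) (X_pow_sub_C_eq_prod hζ hn rfl).symm

theorem IsPrimitiveRoot.prod_range_add_div_one_add_mul {K : Type*} [Field K] {n : ℕ}
    {ζ u z : K} (hζ : IsPrimitiveRoot ζ n) (hn : 0 < n) (hu : (u ^ n) ^ 2 = 1)
    (hz : ∀ i ∈ range n, 1 + z * (u * ζ ^ i) ≠ 0) :
    ∏ i ∈ range n, (z + u * ζ ^ i) / (1 + z * (u * ζ ^ i)) = -(-u) ^ n := by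
  have ht : ((-u) ^ n) ^ 2 = 1 := by
    rw [neg_pow, mul_pow, hu, mul_one, ← pow_mul, mul_comm, pow_mul, neg_one_sq, one_pow]
  set t := (-u) ^ n
  have hnum : ∏ i ∈ range n, (z + u * ζ ^ i) = z ^ n - t := by
    rw [← hζ.prod_range_sub_pow_mul hn z (-u)]
    exact prod_congr rfl fun i _ ↦ by ring
  have hden : ∏ i ∈ range n, (1 + z * (u * ζ ^ i)) = 1 - z ^ n * t := by
    have h := hζ.prod_range_sub_pow_mul hn 1 (z * -u)
    rw [one_pow, mul_pow] at h
    rw [← h]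
    exact prod_congr rfl fun i _ ↦ by ring
  have hden0 : 1 - z ^ n * t ≠ 0 := hden ▸ prod_ne_zero_iff.2 hz
  rw [prod_div_distrib, hnum, hden, div_eq_iff hden0]
  linear_combination (-z ^ n) * ht

/-- the key identity
`∏_{p=c+1}^{c+m/2} (z + w^{2p-1+b-a})/(1 + z w^{2p-1+b-a}) = (-1)^{a+b+m/2}`
for `w` a primitive `m`-th root of unity, `m` even. -/
theorem stmt10 (m : ℕ) (hm : 2 ≤ m) (heven : Even m) (w : ℂ)
    (hw : IsPrimitiveRoot w m) (a b c : ℤ) (z : ℂ)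
    (hz : ∀ p ∈ Finset.range (m / 2),
      1 + z * w ^ (2 * (c + 1 + (p : ℤ)) - 1 + b - a) ≠ 0) :
    ∏ p ∈ Finset.range (m / 2),
        (z + w ^ (2 * (c + 1 + (p : ℤ)) - 1 + b - a)) /
          (1 + z * w ^ (2 * (c + 1 + (p : ℤ)) - 1 + b - a))
      = (-1 : ℂ) ^ (a + b + ((m / 2 : ℕ) : ℤ)) := by
  set n := m / 2
  have hn : 0 < n := by omega
  have hmn : m = n * 2 := by obtain ⟨k, hk⟩ := heven; omega
  have hwn : w ^ n = -1 := (hw.pow (by omega) hmn).eq_neg_one_of_two_right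
  have hζ : IsPrimitiveRoot (w ^ 2) n := hw.pow (by omega) (by rw [hmn, mul_comm])
  set e : ℤ := 2 * c + 1 + b - a
  have hexp (p : ℕ) : w ^ (2 * (c + 1 + (p : ℤ)) - 1 + b - a) = w ^ e * (w ^ 2) ^ p := by
    rw [← pow_mul, ← zpow_natCast, ← zpow_add₀ (hw.ne_zero (by omega))]
    congr 1
    push_cast [e]
    ring
  have hun : (w ^ e) ^ n = (-1) ^ e := by
    rw [← zpow_natCast, ← zpow_mul, mul_comm, zpow_mul, zpow_natCast, hwn]
  have hun_sq : ((w ^ e) ^ n) ^ 2 = 1 := by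
    rw [hun, ← zpow_natCast, ← zpow_mul, mul_comm, zpow_mul]
    norm_num
  have hsign : a + b + n = n + e + 1 + 2 * (a - c - 1) := by ring
  simp only [hexp] at hz ⊢
  rw [hζ.prod_range_add_div_one_add_mul hn hun_sq hz, neg_pow, hun, hsign,
    zpow_add₀ (by norm_num), zpow_add₀ (by norm_num), zpow_add₀ (by norm_num), zpow_mul,
    zpow_natCast]
  norm_num
end

section
/- Let n ≥ 3 be odd and define the matrix 𝓡_n = Σ_{i,j=0}^{n-1} e_{i+j,i-j} ⊗ e_{i,i} on ℂⁿ ⊗ ℂⁿ (indices mod n). Then 𝓡_n satisfies the constant Yang-Baxter equation (𝓡_n)_{12}(𝓡_n)_{13}(𝓡_n)_{23} = (𝓡_n)_{23}(𝓡_n)_{13}(𝓡_n)_{12}. -/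
open Matrix Kronecker Finset

/-- `𝓡_n = Σ_{i,j} e_{i+j,i-j} ⊗ e_{i,i}`. -/
noncomputable def canR (n : ℕ) [NeZero n] : Matrix (ZMod n × ZMod n) (ZMod n × ZMod n) ℂ :=
  ∑ i : ZMod n, ∑ j : ZMod n, EM n (i + j) (i - j) ⊗ₖ EM n i i


/-!
`𝓡_n` is the permutation matrix of `(a, b) ↦ (2b - a, b)`, i.e. of `(a, b) ↦ (b ◃ a, b)` for the
dihedral quandle on `ZMod n`. The leg matrices of a permutation matrix are again permutation
matrices, so the Yang–Baxter equation reduces to an identity between two maps on triples, and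
comparing first coordinates this identity is `c ◃ (b ◃ a) = (c ◃ b) ◃ (c ◃ a)`: self-distributivity,
which holds in every shelf.
-/

open Quandles

section LegMatrices

variable {α β γ : Type*} [DecidableEq α] [DecidableEq β] [DecidableEq γ]

lemma act12_one_submatrix (f : α × β → α × β) :
    act12 (γ := γ) ((1 : Matrix (α × β) (α × β) ℂ).submatrix f id) =
      (1 : Matrix (α × β × γ) (α × β × γ) ℂ).submatrix
        (fun p => ((f (p.1, p.2.1)).1, (f (p.1, p.2.1)).2, p.2.2)) id := by
  ext ⟨a, b, c⟩ ⟨x, y, z⟩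
  simp only [act12, of_apply, submatrix_apply, id_eq, one_apply, Prod.ext_iff]
  split_ifs <;> simp_all

lemma act13_one_submatrix (f : α × γ → α × γ) :
    act13 (β := β) ((1 : Matrix (α × γ) (α × γ) ℂ).submatrix f id) =
      (1 : Matrix (α × β × γ) (α × β × γ) ℂ).submatrix
        (fun p => ((f (p.1, p.2.2)).1, p.2.1, (f (p.1, p.2.2)).2)) id := by
  ext ⟨a, b, c⟩ ⟨x, y, z⟩
  simp only [act13, of_apply, submatrix_apply, id_eq, one_apply, Prod.ext_iff]
  split_ifs <;> simp_all

lemma act23_one_submatrix (f : β × γ → β × γ) :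
    act23 (α := α) ((1 : Matrix (β × γ) (β × γ) ℂ).submatrix f id) =
      (1 : Matrix (α × β × γ) (α × β × γ) ℂ).submatrix
        (fun p => (p.1, (f (p.2.1, p.2.2)).1, (f (p.2.1, p.2.2)).2)) id := by
  ext ⟨a, b, c⟩ ⟨x, y, z⟩
  simp only [act23, of_apply, submatrix_apply, id_eq, one_apply, Prod.ext_iff]
  split_ifs <;> simp_all

end LegMatrices

section OneSubmatrix

variable {ι R : Type*} [Fintype ι] [DecidableEq ι]

lemma one_submatrix_mul_one_submatrix [NonAssocSemiring R] (f g : ι → ι) :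
    (1 : Matrix ι ι R).submatrix f id * (1 : Matrix ι ι R).submatrix g id =
      (1 : Matrix ι ι R).submatrix (g ∘ f) id := by
  rw [← Equiv.coe_refl, one_submatrix_mul, submatrix_submatrix]
  rfl

lemma one_submatrix_eq_sum_single [Semiring R] (f : ι → ι) :
    (1 : Matrix ι ι R).submatrix f id = ∑ i, single i (f i) 1 := by
  ext a b
  simp [one_apply, single_apply, Matrix.sum_apply, ite_and]

end OneSubmatrix

def Shelf.rMatrix (S : Type*) [Shelf S] [DecidableEq S] : Matrix (S × S) (S × S) ℂ :=
  (1 : Matrix (S × S) (S × S) ℂ).submatrix (fun p => (p.2 ◃ p.1, p.2)) id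

theorem Shelf.yangBaxter_rMatrix (S : Type*) [Shelf S] [Fintype S] [DecidableEq S] :
    act12 (rMatrix S) * act13 (rMatrix S) * act23 (rMatrix S) =
      act23 (rMatrix S) * act13 (rMatrix S) * act12 (rMatrix S) := by
  simp only [rMatrix, act12_one_submatrix, act13_one_submatrix, act23_one_submatrix,
    one_submatrix_mul_one_submatrix]
  congr 1
  funext ⟨a, b, c⟩
  simp only [Function.comp_apply]
  rw [self_distrib]

instance (n : ℕ) : DecidableEq (Quandle.Dihedral n) := inferInstanceAs (DecidableEq (ZMod n))

instance (n : ℕ) [NeZero n] : Fintype (Quandle.Dihedral n) := inferInstanceAs (Fintype (ZMod n))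

lemma canR_eq_rMatrix_dihedral (n : ℕ) [NeZero n] :
    canR n = Shelf.rMatrix (Quandle.Dihedral n) := by
  rw [Shelf.rMatrix, one_submatrix_eq_sum_single, Fintype.sum_prod_type, Finset.sum_comm, canR]
  refine Finset.sum_congr rfl fun i _ => ?_
  simp only [EM, single_kronecker_single, mul_one]
  refine Fintype.sum_equiv (Equiv.addLeft i) _ _ fun j => ?_
  -- in `Quandle.Dihedral n`, `i ◃ a = 2 * i - a`
  show _ = single (i + j, i) (2 * i - (i + j), i) 1
  rw [two_mul, add_sub_add_left_eq_sub]

theorem stmt14_general (n : ℕ) [NeZero n] :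
    act12 (canR n) * act13 (canR n) * act23 (canR n)
      = act23 (canR n) * act13 (canR n) * act12 (canR n) := by
  rw [canR_eq_rMatrix_dihedral]
  exact Shelf.yangBaxter_rMatrix (Quandle.Dihedral n)

/-- `𝓡_n` satisfies the constant Yang–Baxter equation. -/
theorem stmt14 (n : ℕ) [NeZero n] (hn : 3 ≤ n) (hodd : Odd n) :
    act12 (canR n) * act13 (canR n) * act23 (canR n)
      = act23 (canR n) * act13 (canR n) * act12 (canR n) :=
  stmt14_general n
end

section
/- Let n ≥ 3 be odd, w a primitive n-th root of unity. The Yang-Baxter equation for R(z) = Σ_{i,j,a=0}^{n-1} g_{(a,j)}(z) e_{i+j,i+a} ⊗ e_{i+a+j,i} is equivalent to the scalar functional equations: for all 0 ≤ a,b,c,d ≤ n-1 and generic x, y, Σ_{k=0}^{n-1} g_{(a,k-d)}(x) g_{(k,a-b)}(xy) g_{(b,c-k)}(y) = Σ_{k=0}^{n-1} g_{(c,k-b)}(x) g_{(k,c-d)}(xy) g_{(d,a-k)}(y). -/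
open Matrix Kronecker Finset

/-!
Indexing by `ZMod n`, the entry of `R(z)` at `((r, s), (r', s'))` is `g_{(r' - s', r - s')}(z)`
if `r + r' = s + s'` and `0` otherwise. For matrices of this charge-conserving shape over any
finite abelian group, the entry of either side of the Yang–Baxter equation at
`((u₁, u₂, u₃), (v₁, v₂, v₃))` vanishes unless `u₁ - u₂ + u₃ = v₁ - v₂ + v₃`, and otherwise the
two constraints on the three internal indices leave a single sum over `k`: the left resp. right
side of the scalar equation at `a = u₂ - u₁`, `b = v₂ - v₃`, `c = v₁ - v₂`, `d = u₃ - u₂`.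
Every quadruple `(a, b, c, d)` arises this way. Since `w ^ n = 1`, `g_{(a,j)}` only depends on
`j` modulo `n`, so the integer indices of the scalar equations may be read in `ZMod n`.
-/

section Act

variable {α β γ : Type*} [Fintype α] [Fintype β] [Fintype γ]
  [DecidableEq α] [DecidableEq β] [DecidableEq γ]

theorem act12_mul_act13_mul_act23_apply (X : Matrix (α × β) (α × β) ℂ)
    (Y : Matrix (α × γ) (α × γ) ℂ) (Z : Matrix (β × γ) (β × γ) ℂ) (u v : α × β × γ) :
    (act12 X * act13 Y * act23 Z : Matrix (α × β × γ) (α × β × γ) ℂ) u v =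
      ∑ p₂, ∑ q₃, ∑ p₁,
        X (u.1, u.2.1) (p₁, p₂) * Y (p₁, u.2.2) (v.1, q₃) * Z (p₂, q₃) (v.2.1, v.2.2) := by
  simp [Matrix.mul_apply, act12, act13, act23, Fintype.sum_prod_type, Finset.sum_mul]

theorem act23_mul_act13_mul_act12_apply (X : Matrix (α × β) (α × β) ℂ)
    (Y : Matrix (α × γ) (α × γ) ℂ) (Z : Matrix (β × γ) (β × γ) ℂ) (u v : α × β × γ) :
    (act23 Z * act13 Y * act12 X : Matrix (α × β × γ) (α × β × γ) ℂ) u v =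
      ∑ q₁, ∑ p₂, ∑ p₃,
        Z (u.2.1, u.2.2) (p₂, p₃) * Y (u.1, p₃) (q₁, v.2.2) * X (q₁, p₂) (v.1, v.2.1) := by
  simp [Matrix.mul_apply, act12, act13, act23, Fintype.sum_prod_type, Finset.sum_mul]

end Act

section ChargeMatrix

variable {A : Type*} [AddCommGroup A] [Fintype A] [DecidableEq A]

def chargeMatrix (f : A → A → ℂ) : Matrix (A × A) (A × A) ℂ :=
  Matrix.of fun p q => if p.1 + q.1 = p.2 + q.2 then f (q.1 - q.2) (p.1 - q.2) else 0

def ybeSum (f g h : A → A → ℂ) (a b c d : A) : ℂ :=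
  ∑ k, f a (k - d) * g k (a - b) * h b (c - k)

theorem act12_mul_act13_mul_act23_chargeMatrix_apply (f g h : A → A → ℂ)
    (u₁ u₂ u₃ v₁ v₂ v₃ : A) :
    (act12 (chargeMatrix f) * act13 (chargeMatrix g) * act23 (chargeMatrix h) :
        Matrix (A × A × A) (A × A × A) ℂ) (u₁, u₂, u₃) (v₁, v₂, v₃) =
      if u₁ - u₂ + u₃ = v₁ - v₂ + v₃ then
        ybeSum f g h (u₂ - u₁) (v₂ - v₃) (v₁ - v₂) (u₃ - u₂)
      else 0 := by
  have hY : ∀ p₁ q₃, p₁ + v₁ = u₃ + q₃ ↔ p₁ = u₃ + q₃ - v₁ := fun _ _ =>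
    eq_sub_iff_add_eq.symm
  have hZ : ∀ p₂ q₃, p₂ + v₂ = q₃ + v₃ ↔ q₃ = p₂ + v₂ - v₃ := fun _ _ => by
    rw [eq_sub_iff_add_eq, eq_comm]
  have hX : ∀ p₂, u₁ + (u₃ + (p₂ + v₂ - v₃) - v₁) = u₂ + p₂ ↔
      u₁ - u₂ + u₃ = v₁ - v₂ + v₃ := fun p₂ => by
    rw [← sub_eq_zero, ← sub_eq_zero (a := u₁ - u₂ + u₃)]
    congr! 1
    abel
  simp only [act12_mul_act13_mul_act23_apply, chargeMatrix, Matrix.of_apply, hY, hZ, ite_mul,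
    mul_ite, zero_mul, mul_zero, Finset.sum_ite_irrel, Finset.sum_ite_eq', Finset.mem_univ,
    if_true, Finset.sum_const_zero]
  simp only [hX, Finset.sum_ite_irrel, Finset.sum_const_zero]
  split_ifs with hc
  · obtain rfl := eq_sub_of_add_eq' hc
    refine Fintype.sum_equiv (Equiv.subLeft (v₁ + v₃ - v₂)) _ _ fun k => ?_
    simp only [Equiv.subLeft_apply]
    abel_nf
  · rfl

theorem act23_mul_act13_mul_act12_chargeMatrix_apply (f g h : A → A → ℂ)
    (u₁ u₂ u₃ v₁ v₂ v₃ : A) :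
    (act23 (chargeMatrix h) * act13 (chargeMatrix g) * act12 (chargeMatrix f) :
        Matrix (A × A × A) (A × A × A) ℂ) (u₁, u₂, u₃) (v₁, v₂, v₃) =
      if u₁ - u₂ + u₃ = v₁ - v₂ + v₃ then
        ybeSum f g h (v₁ - v₂) (u₃ - u₂) (u₂ - u₁) (v₂ - v₃)
      else 0 := by
  have hY : ∀ p₃ q₁, u₁ + q₁ = p₃ + v₃ ↔ p₃ = u₁ + q₁ - v₃ := fun _ _ => by
    rw [eq_sub_iff_add_eq, eq_comm]
  have hX : ∀ p₂ q₁, q₁ + v₁ = p₂ + v₂ ↔ p₂ = q₁ + v₁ - v₂ := fun _ _ => by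
    rw [eq_sub_iff_add_eq, eq_comm]
  have hZ : ∀ q₁, u₂ + (q₁ + v₁ - v₂) = u₃ + (u₁ + q₁ - v₃) ↔
      u₁ - u₂ + u₃ = v₁ - v₂ + v₃ := fun q₁ => by
    rw [← sub_eq_zero, eq_comm (a := u₁ - u₂ + u₃), ← sub_eq_zero (a := v₁ - v₂ + v₃)]
    congr! 1
    abel
  simp only [act23_mul_act13_mul_act12_apply, chargeMatrix, Matrix.of_apply, hY, hX, ite_mul,
    mul_ite, zero_mul, mul_zero, Finset.sum_ite_irrel, Finset.sum_ite_eq', Finset.mem_univ,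
    if_true, Finset.sum_const_zero]
  simp only [hZ, Finset.sum_ite_irrel, Finset.sum_const_zero]
  split_ifs with hc
  · obtain rfl := eq_sub_of_add_eq' hc
    refine Fintype.sum_equiv (Equiv.subRight v₃) _ _ fun k => ?_
    simp only [Equiv.subRight_apply]
    abel_nf
    ring
  · rfl

theorem yangBaxter_chargeMatrix_iff (f g h : A → A → ℂ) :
    (act12 (chargeMatrix f) * act13 (chargeMatrix g) * act23 (chargeMatrix h) =
        (act23 (chargeMatrix h) * act13 (chargeMatrix g) * act12 (chargeMatrix f) :
          Matrix (A × A × A) (A × A × A) ℂ)) ↔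
      ∀ a b c d, ybeSum f g h a b c d = ybeSum f g h c d a b := by
  constructor
  · intro hYB a b c d
    have := congr_fun (congr_fun hYB (0, a, a + d)) (b + c + (d - c), b + (d - c), d - c)
    rw [act12_mul_act13_mul_act23_chargeMatrix_apply,
      act23_mul_act13_mul_act12_chargeMatrix_apply, if_pos (by abel), if_pos (by abel)] at this
    convert this using 2 <;> abel
  · intro hS
    ext ⟨u₁, u₂, u₃⟩ ⟨v₁, v₂, v₃⟩
    rw [act12_mul_act13_mul_act23_chargeMatrix_apply,
      act23_mul_act13_mul_act12_chargeMatrix_apply]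
    split_ifs
    · exact hS _ _ _ _
    · rfl

end ChargeMatrix

theorem sum_range_natCast_zmod {n : ℕ} [NeZero n] {M : Type*} [AddCommMonoid M]
    (f : ZMod n → M) : ∑ j ∈ range n, f j = ∑ j : ZMod n, f j :=
  Finset.sum_nbij' (↑) ZMod.val (by simp) (by simp [ZMod.val_lt])
    (fun j hj => by simp [ZMod.val_cast_of_lt (mem_range.1 hj)]) (by simp) (fun _ _ => rfl)

theorem gfun_eq_of_intCast_eq {n : ℕ} [NeZero n] {w : ℂ} (hw : w ^ n = 1) (a : ℕ) {j j' : ℤ}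
    (h : (j : ZMod n) = j') (z : ℂ) : gfun n w a j z = gfun n w a j' z := by
  have hw0 : w ≠ 0 := by
    rintro rfl
    exact NeZero.ne n (zero_pow_eq_one₀.1 hw)
  obtain ⟨t, ht⟩ := ((ZMod.intCast_eq_intCast_iff_dvd_sub _ _ _).1 h.symm)
  obtain rfl : j = j' + n * t := by linarith
  unfold gfun
  congr 1
  refine Finset.sum_congr rfl fun b _ => ?_
  rw [show 2 * (b : ℤ) * (j' + n * t) = 2 * b * j' + n * (2 * b * t) by ring,
    zpow_add₀ hw0, _root_.zpow_mul w n, zpow_natCast, hw, _root_.one_zpow, mul_one]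

noncomputable def gfunMod (n : ℕ) (w z : ℂ) (a j : ZMod n) : ℂ :=
  gfun n w a.val (j.val : ℤ) z

theorem gfun_eq_gfunMod {n : ℕ} [NeZero n] {w : ℂ} (hw : w ^ n = 1) {a : ℕ} (ha : a < n)
    (j : ℤ) (z : ℂ) : gfun n w a j z = gfunMod n w z a j := by
  rw [gfunMod, ZMod.val_cast_of_lt ha]
  exact gfun_eq_of_intCast_eq hw a (by simp) z

theorem Rmat_eq_chargeMatrix (n : ℕ) [NeZero n] (w z : ℂ) :
    Rmat n w z = chargeMatrix (gfunMod n w z) := by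
  have hR : Rmat n w z = ∑ i : ZMod n, ∑ j : ZMod n, ∑ a : ZMod n,
      gfunMod n w z a j • (EM n (i + j) (i + a) ⊗ₖ EM n (i + a + j) i) := by
    refine Finset.sum_congr rfl fun i _ => ?_
    rw [← sum_range_natCast_zmod]
    refine Finset.sum_congr rfl fun j hj => ?_
    rw [← sum_range_natCast_zmod]
    refine Finset.sum_congr rfl fun a ha => ?_
    simp only [gfunMod, ZMod.val_cast_of_lt (mem_range.1 ha),
      ZMod.val_cast_of_lt (mem_range.1 hj)]
  ext ⟨r, s⟩ ⟨r', s'⟩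
  have key : ∀ i j a : ZMod n, ((i + j = r ∧ i + a = r') ∧ i + a + j = s ∧ i = s') ↔
      i = s' ∧ j = r - s' ∧ a = r' - s' ∧ r + r' = s + s' := by
    intro i j a
    constructor
    · rintro ⟨⟨rfl, rfl⟩, rfl, rfl⟩
      exact ⟨rfl, by ring, by ring, by ring⟩
    · rintro ⟨rfl, rfl, rfl, h⟩
      exact ⟨⟨by ring, by ring⟩, by linear_combination h, rfl⟩
  simp only [hR, EM, chargeMatrix, Matrix.sum_apply, Matrix.smul_apply,
    Matrix.kroneckerMap_apply, Matrix.single_apply, Matrix.of_apply, ite_zero_mul_ite_zero,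
    mul_one, smul_eq_mul]
  simp only [key, ite_and, mul_ite, mul_one, mul_zero, Finset.sum_ite_irrel,
    Finset.sum_ite_eq', Finset.mem_univ, if_true, Finset.sum_const_zero]

theorem sum_range_gfun_eq_ybeSum {n : ℕ} [NeZero n] {w : ℂ} (hw : w ^ n = 1) {a b : ℕ}
    (ha : a < n) (hb : b < n) (c d : ℕ) (x₁ x₂ x₃ : ℂ) :
    ∑ k ∈ range n, gfun n w a ((k : ℤ) - d) x₁ * gfun n w k ((a : ℤ) - b) x₂
        * gfun n w b ((c : ℤ) - k) x₃ =
      ybeSum (gfunMod n w x₁) (gfunMod n w x₂) (gfunMod n w x₃) a b c d := by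
  rw [ybeSum, ← sum_range_natCast_zmod]
  refine Finset.sum_congr rfl fun k hk => ?_
  rw [gfun_eq_gfunMod hw ha, gfun_eq_gfunMod hw (mem_range.1 hk), gfun_eq_gfunMod hw hb]
  push_cast
  rfl

theorem stmt16_general (n : ℕ) [NeZero n]
    (w : ℂ) (hw : IsPrimitiveRoot w n) (x y : ℂ) :
    (act12 (Rmat n w x) * act13 (Rmat n w (x * y)) * act23 (Rmat n w y)
        = act23 (Rmat n w y) * act13 (Rmat n w (x * y)) * act12 (Rmat n w x))
      ↔ (∀ a ∈ Finset.range n, ∀ b ∈ Finset.range n, ∀ c ∈ Finset.range n,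
          ∀ d ∈ Finset.range n,
          ∑ k ∈ Finset.range n,
              gfun n w a ((k : ℤ) - d) x * gfun n w k ((a : ℤ) - b) (x * y)
                * gfun n w b ((c : ℤ) - k) y
            = ∑ k ∈ Finset.range n,
              gfun n w c ((k : ℤ) - b) x * gfun n w k ((c : ℤ) - d) (x * y)
                * gfun n w d ((a : ℤ) - k) y) := by
  have hw1 := hw.pow_eq_one
  simp only [Rmat_eq_chargeMatrix, yangBaxter_chargeMatrix_iff]
  constructor
  · intro hS a ha b hb c hc d hd
    rw [sum_range_gfun_eq_ybeSum hw1 (mem_range.1 ha) (mem_range.1 hb),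
      sum_range_gfun_eq_ybeSum hw1 (mem_range.1 hc) (mem_range.1 hd)]
    exact hS _ _ _ _
  · intro hS a b c d
    have := hS a.val (mem_range.2 a.val_lt) b.val (mem_range.2 b.val_lt)
      c.val (mem_range.2 c.val_lt) d.val (mem_range.2 d.val_lt)
    rw [sum_range_gfun_eq_ybeSum hw1 a.val_lt b.val_lt,
      sum_range_gfun_eq_ybeSum hw1 c.val_lt d.val_lt] at this
    simpa only [ZMod.natCast_zmod_val] using this

/-- the Yang–Baxter equation for `R(z)` is equivalent to the scalar
functional equations
`Σ_k g_{(a,k-d)}(x) g_{(k,a-b)}(xy) g_{(b,c-k)}(y) = Σ_k g_{(c,k-b)}(x) g_{(k,c-d)}(xy) g_{(d,a-k)}(y)`. -/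
theorem stmt16 (n : ℕ) [NeZero n] (hn : 3 ≤ n) (hodd : Odd n)
    (w : ℂ) (hw : IsPrimitiveRoot w n) (x y : ℂ) :
    (act12 (Rmat n w x) * act13 (Rmat n w (x * y)) * act23 (Rmat n w y)
        = act23 (Rmat n w y) * act13 (Rmat n w (x * y)) * act12 (Rmat n w x))
      ↔ (∀ a ∈ Finset.range n, ∀ b ∈ Finset.range n, ∀ c ∈ Finset.range n,
          ∀ d ∈ Finset.range n,
          ∑ k ∈ Finset.range n,
              gfun n w a ((k : ℤ) - d) x * gfun n w k ((a : ℤ) - b) (x * y)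
                * gfun n w b ((c : ℤ) - k) y
            = ∑ k ∈ Finset.range n,
              gfun n w c ((k : ℤ) - b) x * gfun n w k ((c : ℤ) - d) (x * y)
                * gfun n w d ((a : ℤ) - k) y) :=
  stmt16_general n w hw x y
end
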